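/- Let N be a countable transitive model of ZFC with N ⊨ 'P is a partially ordered set and P forces ṙ to be a Cohen real'. Suppose p ∈ P and s ∈ ω^ω is a Cohen real over N. Then there is an N-generic filter G ⊆ P with p ∈ G such that ṙ/G agrees with s modulo finite (i.e., (ṙ/G)(n) = s(n) for all but finitely many n). -/

import Mathlib

noncomputable section

open ZFSet

/-! ### Internal first-order language of set theory and satisfaction in a set `M` -/

/-- First-order formulas of set theory, with de Bruijn variables. -/
inductive Fml : ℕ → Type
  | mem {n} (i j : Fin n) : Fml n
  | eq {n} (i j : Fin n) : Fml n
  | imp {n} : Fml n → Fml n → Fml n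
  | neg {n} : Fml n → Fml n
  | all {n} : Fml (n + 1) → Fml n

namespace Fml

def and {n} (φ ψ : Fml n) : Fml n := neg (imp φ (neg ψ))
def or {n} (φ ψ : Fml n) : Fml n := imp (neg φ) ψ
def iff {n} (φ ψ : Fml n) : Fml n := (imp φ ψ).and (imp ψ φ)
def ex {n} (φ : Fml (n + 1)) : Fml n := neg (all (neg φ))

/-- Variable renaming. -/
def rename : ∀ {m k : ℕ}, (Fin m → Fin k) → Fml m → Fml k
  | _, _, r, mem i j => mem (r i) (r j)
  | _, _, r, eq i j => eq (r i) (r j)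
  | _, _, r, imp φ ψ => imp (rename r φ) (rename r ψ)
  | _, _, r, neg φ => neg (rename r φ)
  | _, _, r, all φ => all (rename (fun i => Fin.cases 0 (fun j => (r j).succ) i) φ)

end Fml

/-- Satisfaction of a formula in the structure `(M, ∈)`, with valuation `v`. -/
def SatM (M : ZFSet) : ∀ {n : ℕ}, Fml n → (Fin n → ZFSet) → Prop
  | _, .mem i j, v => v i ∈ v j
  | _, .eq i j, v => v i = v j
  | _, .imp φ ψ, v => SatM M φ v → SatM M ψ v
  | _, .neg φ, v => ¬ SatM M φ v
  | _, .all φ, v => ∀ x : ZFSet, x ∈ M → SatM M φ (Fin.cons x v)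

/-- Satisfaction for all valuations into `M`. -/
def SatAll (M : ZFSet) {n : ℕ} (φ : Fml n) : Prop :=
  ∀ v : Fin n → ZFSet, (∀ i, v i ∈ M) → SatM M φ v

/-! The axioms of ZFC. -/

def axExt : Fml 2 := .imp (.all (.iff (.mem 0 1) (.mem 0 2))) (.eq 0 1)
def axPair : Fml 2 := .ex (.and (.mem 1 0) (.mem 2 0))
def axUnion : Fml 1 := .ex (.all (.all (.imp (.and (.mem 0 1) (.mem 1 3)) (.mem 0 2))))
def axPower : Fml 1 := .ex (.all (.imp (.all (.imp (.mem 0 1) (.mem 0 3))) (.mem 0 1)))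
def axInf : Fml 0 :=
  .ex (.and (.ex (.and (.mem 0 1) (.all (.neg (.mem 0 1)))))
    (.all (.imp (.mem 0 1)
      (.ex (.and (.mem 0 2) (.and (.mem 1 0)
        (.all (.iff (.mem 0 1) (.or (.mem 0 2) (.eq 0 2))))))))))
def axFound : Fml 1 :=
  .imp (.ex (.mem 0 1)) (.ex (.and (.mem 0 1) (.all (.imp (.mem 0 1) (.neg (.mem 0 2))))))
def axChoice : Fml 1 :=
  .imp
    (.and (.all (.imp (.mem 0 1) (.ex (.mem 0 1))))
      (.all (.imp (.mem 0 1) (.all (.imp (.mem 0 2)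
        (.imp (.neg (.eq 1 0)) (.neg (.ex (.and (.mem 0 2) (.mem 0 1))))))))))
    (.ex (.all (.imp (.mem 0 2) (.ex (.and (.mem 0 1) (.and (.mem 0 2)
      (.all (.imp (.and (.mem 0 2) (.mem 0 3)) (.eq 0 1)))))))))

/-- Separation axiom for the formula `φ(x, p₁, …, pₙ)`. -/
def axSep {n : ℕ} (φ : Fml (n + 1)) : Fml (n + 1) :=
  .ex (.all (.iff (.mem 0 1) (.and (.mem 0 2)
    (φ.rename (fun i => Fin.cases 0 (fun j => j.succ.succ.succ) i)))))

/-- Collection axiom for the formula `φ(x, y, p₁, …, pₙ)`. -/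
def axColl {n : ℕ} (φ : Fml (n + 2)) : Fml (n + 1) :=
  .imp
    (.all (.imp (.mem 0 1)
      (.ex (φ.rename (fun i =>
        Fin.cases 1 (fun i' => Fin.cases 0 (fun j => j.succ.succ.succ) i') i)))))
    (.ex (.all (.imp (.mem 0 2) (.ex (.and (.mem 0 2)
      (φ.rename (fun i =>
        Fin.cases 1 (fun i' => Fin.cases 0 (fun j => j.succ.succ.succ.succ) i') i)))))))

/-- `M` is a transitive model of ZFC (with the collection scheme). -/
def IsTransModelZFC (M : ZFSet) : Prop :=
  M.IsTransitive ∧ SatAll M axExt ∧ SatAll M axPair ∧ SatAll M axUnion ∧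
    SatAll M axPower ∧ SatAll M axInf ∧ SatAll M axFound ∧ SatAll M axChoice ∧
    (∀ (n : ℕ) (φ : Fml (n + 1)), SatAll M (axSep φ)) ∧
    (∀ (n : ℕ) (φ : Fml (n + 2)), SatAll M (axColl φ))

/-! ### Coding countable objects as elements of `ZFSet` -/

/-- The von Neumann natural numbers. -/
def natZF : ℕ → ZFSet
  | 0 => ∅
  | n + 1 => insert (natZF n) (natZF n)

/-- The code of a function `ℕ → ℕ` as a set of Kuratowski pairs. -/
def funZF (f : ℕ → ℕ) : ZFSet :=
  ZFSet.range fun n : ℕ => ZFSet.pair (natZF n) (natZF (f n))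

/-- The code of a finite sequence of naturals. -/
def listZF (l : List ℕ) : ZFSet :=
  ZFSet.range fun i : Fin l.length => ZFSet.pair (natZF i) (natZF (l.get i))

/-- The code of a set of finite sequences of naturals. -/
def listSetZF (D : Set (List ℕ)) : ZFSet :=
  ZFSet.range fun l : D => listZF l.1

end

noncomputable section

open Filter

/-- The code of a subset of a coded poset. -/
def subsetZF {P : Type} (cP : P → ZFSet) (D : Set P) : ZFSet :=
  ZFSet.range fun a : D => cP a.1

/-- The code of the order relation of a coded poset. -/
def ordZF {P : Type} [Preorder P] (cP : P → ZFSet) : ZFSet :=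
  ZFSet.range fun q : {q : P × P // q.1 ≤ q.2} => ZFSet.pair (cP q.1.1) (cP q.1.2)

/-- The code of a name for an element of `ω^ω`, presented by its deciding relation. -/
def decZF {P : Type} (cP : P → ZFSet) (Dec : P → ℕ → ℕ → Prop) : ZFSet :=
  ZFSet.range fun w : {w : P × ℕ × ℕ // Dec w.1 w.2.1 w.2.2} =>
    ZFSet.pair (cP w.1.1) (ZFSet.pair (natZF w.1.2.1) (natZF w.1.2.2))

/-- `G` is an `N`-generic filter on the coded poset `P`. -/
def IsGenericFilter {P : Type} [Preorder P] (N : ZFSet) (cP : P → ZFSet)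
    (G : Set P) : Prop :=
  (∀ a ∈ G, ∀ b : P, a ≤ b → b ∈ G) ∧
    (∀ a ∈ G, ∀ b ∈ G, ∃ c ∈ G, c ≤ a ∧ c ≤ b) ∧
    ∀ D : Set P, subsetZF cP D ∈ N → (∀ a : P, ∃ b ∈ D, b ≤ a) → (G ∩ D).Nonempty

namespace CohenProofAux

open ZFSet

/-! ### Semantics toolkit -/

theorem satm_rename {M : ZFSet} : ∀ {m k : ℕ} (r : Fin m → Fin k) (φ : Fml m)
    (v : Fin k → ZFSet), SatM M (φ.rename r) v ↔ SatM M φ (v ∘ r)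
  | _, _, _, .mem _ _, _ => Iff.rfl
  | _, _, _, .eq _ _, _ => Iff.rfl
  | _, _, r, .imp φ ψ, v => imp_congr (satm_rename r φ v) (satm_rename r ψ v)
  | _, _, r, .neg φ, v => not_congr (satm_rename r φ v)
  | _, _, r, .all φ, v => by
    simp only [Fml.rename, SatM]
    refine forall₂_congr fun x hx => ?_
    rw [satm_rename]
    have hcv : (Fin.cons x v) ∘ (fun i => Fin.cases 0 (fun j => (r j).succ) i)
        = Fin.cons x (v ∘ r) := by
      funext i
      cases i using Fin.cases with
      | zero => simp
      | succ j => simp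
    rw [hcv]

theorem satm_neg {M : ZFSet} {n} (φ : Fml n) (v : Fin n → ZFSet) :
    SatM M (.neg φ) v ↔ ¬ SatM M φ v := Iff.rfl

theorem satm_imp {M : ZFSet} {n} (φ ψ : Fml n) (v : Fin n → ZFSet) :
    SatM M (.imp φ ψ) v ↔ (SatM M φ v → SatM M ψ v) := Iff.rfl

theorem satm_all {M : ZFSet} {n} (φ : Fml (n+1)) (v : Fin n → ZFSet) :
    SatM M (.all φ) v ↔ ∀ x, x ∈ M → SatM M φ (Fin.cons x v) := Iff.rfl

theorem satm_and {M : ZFSet} {n} (φ ψ : Fml n) (v : Fin n → ZFSet) :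
    SatM M (.and φ ψ) v ↔ SatM M φ v ∧ SatM M ψ v := by
  simp only [Fml.and, SatM]; tauto

theorem satm_or {M : ZFSet} {n} (φ ψ : Fml n) (v : Fin n → ZFSet) :
    SatM M (.or φ ψ) v ↔ SatM M φ v ∨ SatM M ψ v := by
  simp only [Fml.or, SatM]; tauto

theorem satm_iff {M : ZFSet} {n} (φ ψ : Fml n) (v : Fin n → ZFSet) :
    SatM M (.iff φ ψ) v ↔ (SatM M φ v ↔ SatM M ψ v) := by
  simp only [Fml.iff, Fml.and, SatM]; tauto

theorem satm_ex {M : ZFSet} {n} (φ : Fml (n+1)) (v : Fin n → ZFSet) :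
    SatM M (.ex φ) v ↔ ∃ x, x ∈ M ∧ SatM M φ (Fin.cons x v) := by
  show ¬ (∀ x, x ∈ M → ¬ SatM M φ (Fin.cons x v)) ↔ _
  push_neg
  rfl

/-! ### `natZF` basics -/

theorem mem_natZF {z : ZFSet} : ∀ {n : ℕ}, z ∈ natZF n ↔ ∃ m, m < n ∧ z = natZF m := by
  intro n
  induction n with
  | zero => simp [natZF]
  | succ n ih =>
    simp only [natZF, ZFSet.mem_insert_iff, ih]
    constructor
    · rintro (rfl | ⟨m, hm, rfl⟩)
      · exact ⟨n, by omega, rfl⟩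
      · exact ⟨m, by omega, rfl⟩
    · rintro ⟨m, hm, rfl⟩
      rcases Nat.lt_succ_iff_lt_or_eq.mp hm with h | rfl
      · exact Or.inr ⟨m, h, rfl⟩
      · exact Or.inl rfl

theorem natZF_mem_natZF {n m : ℕ} (h : n < m) : natZF n ∈ natZF m :=
  mem_natZF.mpr ⟨n, h, rfl⟩

theorem zfmem_irrefl (x : ZFSet) : x ∉ x := fun h =>
  (ZFSet.mem_wf.isIrrefl).irrefl x h

theorem natZF_injective : Function.Injective natZF := by
  intro n m h
  by_contra hne
  rcases Nat.lt_or_ge n m with hlt | hge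
  · have hm := natZF_mem_natZF hlt
    rw [← h] at hm
    exact zfmem_irrefl _ hm
  · have hlt : m < n := by omega
    have hm := natZF_mem_natZF hlt
    rw [h] at hm
    exact zfmem_irrefl _ hm

theorem natZF_isTransitive : ∀ n : ℕ, (natZF n).IsTransitive := by
  intro n
  induction n with
  | zero => exact isTransitive_empty
  | succ n ih =>
    intro y hy
    rcases mem_natZF.mp hy with ⟨m, hm, rfl⟩
    intro z hz
    rcases mem_natZF.mp hz with ⟨j, hj, rfl⟩
    exact natZF_mem_natZF (by omega)

/-! ### `listZF` basics -/

theorem getD_eq {l : List ℕ} {i : ℕ} (hi : i < l.length) : l.getD i 0 = l[i] := by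
  simp [List.getD, List.getElem?_eq_getElem hi]

theorem mem_listZF {z : ZFSet} {l : List ℕ} :
    z ∈ listZF l ↔ ∃ i, i < l.length ∧ z = ZFSet.pair (natZF i) (natZF (l.getD i 0)) := by
  unfold listZF
  rw [ZFSet.mem_range]
  constructor
  · rintro ⟨⟨i, hi⟩, rfl⟩
    exact ⟨i, hi, by simp only [getD_eq hi, List.get_eq_getElem]⟩
  · rintro ⟨i, hi, rfl⟩
    exact ⟨⟨i, hi⟩, by simp only [getD_eq hi, List.get_eq_getElem]⟩

theorem pair_mem_listZF {x y : ZFSet} {l : List ℕ} :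
    ZFSet.pair x y ∈ listZF l ↔
      ∃ i, i < l.length ∧ x = natZF i ∧ y = natZF (l.getD i 0) := by
  rw [mem_listZF]
  constructor
  · rintro ⟨i, hi, h⟩
    obtain ⟨h1, h2⟩ := ZFSet.pair_injective h
    exact ⟨i, hi, h1, h2⟩
  · rintro ⟨i, hi, rfl, rfl⟩
    exact ⟨i, hi, rfl⟩

theorem listZF_subset_of_prefix {a b : List ℕ} (h : a <+: b) : listZF a ⊆ listZF b := by
  intro z hz
  rcases mem_listZF.mp hz with ⟨i, hi, rfl⟩
  have hib : i < b.length := lt_of_lt_of_le hi h.length_le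
  have : a.getD i 0 = b.getD i 0 := by
    rw [getD_eq hi, getD_eq hib]
    exact h.getElem hi
  rw [this]
  exact mem_listZF.mpr ⟨i, hib, rfl⟩

theorem prefix_of_listZF_subset {a b : List ℕ} (h : listZF a ⊆ listZF b) : a <+: b := by
  have hlen : a.length ≤ b.length := by
    rcases Nat.eq_zero_or_pos a.length with h0 | h0
    · omega
    · have hmem : ZFSet.pair (natZF (a.length - 1)) (natZF (a.getD (a.length - 1) 0))
          ∈ listZF b := h (mem_listZF.mpr ⟨a.length - 1, by omega, rfl⟩)
      rcases pair_mem_listZF.mp hmem with ⟨j, hj, hje, _⟩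
      have := natZF_injective hje
      omega
  have hval : ∀ i, i < a.length → a.getD i 0 = b.getD i 0 := by
    intro i hi
    have hmem : ZFSet.pair (natZF i) (natZF (a.getD i 0)) ∈ listZF b :=
      h (mem_listZF.mpr ⟨i, hi, rfl⟩)
    rcases pair_mem_listZF.mp hmem with ⟨j, hj, hje, hve⟩
    have hij := natZF_injective hje
    subst hij
    exact natZF_injective hve
  refine List.prefix_iff_eq_take.mpr (List.ext_getElem (by simp [Nat.min_eq_left hlen]) ?_)
  intro i h1 h2
  have hia : i < a.length := h1
  have := hval i hia
  rw [List.getElem_take]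
  simpa only [getD_eq hia, getD_eq (lt_of_lt_of_le hia hlen)] using this

theorem listZF_subset_iff {a b : List ℕ} : listZF a ⊆ listZF b ↔ a <+: b :=
  ⟨prefix_of_listZF_subset, listZF_subset_of_prefix⟩

theorem mem_listSetZF {z : ZFSet} {D : Set (List ℕ)} :
    z ∈ listSetZF D ↔ ∃ l ∈ D, z = listZF l := by
  unfold listSetZF
  rw [ZFSet.mem_range]
  constructor
  · rintro ⟨⟨l, hl⟩, rfl⟩; exact ⟨l, hl, rfl⟩
  · rintro ⟨l, hl, rfl⟩; exact ⟨⟨l, hl⟩, rfl⟩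


/-! ### Closure properties of a transitive model -/

section Model

variable {N : ZFSet} (hN : IsTransModelZFC N)
include hN

theorem trN {x y : ZFSet} (hx : x ∈ N) (hy : y ∈ x) : y ∈ N := hN.1 x hx hy

/-- Separation closure. -/
theorem sepN {n : ℕ} (φ : Fml (n+1)) (X : ZFSet) (par : Fin n → ZFSet)
    (hX : X ∈ N) (hpar : ∀ i, par i ∈ N) :
    ∃ Y ∈ N, ∀ z, z ∈ Y ↔ z ∈ X ∧ SatM N φ (Fin.cons z par) := by
  have hval : ∀ i, (Fin.cons X par : Fin (n+1) → ZFSet) i ∈ N := by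
    intro i
    cases i using Fin.cases with
    | zero => exact hX
    | succ j => exact hpar j
  have hsep := hN.2.2.2.2.2.2.2.2.1 n φ (Fin.cons X par) hval
  unfold axSep at hsep
  rw [satm_ex] at hsep
  obtain ⟨Y, hY, hbody⟩ := hsep
  rw [satm_all] at hbody
  refine ⟨Y, hY, fun z => ?_⟩
  constructor
  · intro hz
    have hzN : z ∈ N := trN hN hY hz
    have := hbody z hzN
    rw [satm_iff] at this
    have h2 := this.mp hz
    rw [satm_and] at h2
    obtain ⟨h2a, h2b⟩ := h2
    rw [satm_rename] at h2b
    refine ⟨h2a, ?_⟩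
    have hcomp : (Fin.cons z (Fin.cons Y (Fin.cons X par)) : Fin (n+3) → ZFSet) ∘
        (fun i => Fin.cases 0 (fun j => j.succ.succ.succ) i) = Fin.cons z par := by
      funext i
      cases i using Fin.cases with
      | zero => simp
      | succ j => simp
    rwa [hcomp] at h2b
  · rintro ⟨hzX, hzφ⟩
    have hzN : z ∈ N := trN hN hX hzX
    have := hbody z hzN
    rw [satm_iff] at this
    refine this.mpr ?_
    rw [satm_and]
    refine ⟨hzX, ?_⟩
    rw [satm_rename]
    have hcomp : (Fin.cons z (Fin.cons Y (Fin.cons X par)) : Fin (n+3) → ZFSet) ∘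
        (fun i => Fin.cases 0 (fun j => j.succ.succ.succ) i) = Fin.cons z par := by
      funext i
      cases i using Fin.cases with
      | zero => simp
      | succ j => simp
    rwa [hcomp]

/-- Pairing closure. -/
theorem pairsetN {a b : ZFSet} (ha : a ∈ N) (hb : b ∈ N) : ({a, b} : ZFSet) ∈ N := by
  have hpair := hN.2.2.1 ![a, b] (by
    intro i
    fin_cases i <;> simpa)
  unfold axPair at hpair
  rw [satm_ex] at hpair
  obtain ⟨c, hc, hccl⟩ := hpair
  rw [satm_and] at hccl
  obtain ⟨hac, hbc⟩ := hccl
  simp only [SatM, Fin.cons_succ, Fin.cons_zero] at hac hbc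
  have hsep := sepN hN (n := 2) (.or (.eq 0 1) (.eq 0 2)) c ![a, b] hc (by
    intro i
    fin_cases i <;> simpa)
  obtain ⟨Y, hY, hYc⟩ := hsep
  have : Y = ({a, b} : ZFSet) := by
    apply ZFSet.ext
    intro z
    rw [hYc, ZFSet.mem_pair]
    constructor
    · rintro ⟨_, h⟩
      rw [satm_or] at h
      exact h.imp (fun e => e) (fun e => e)
    · rintro (rfl | rfl)
      · exact ⟨hac, (satm_or _ _ _).mpr (Or.inl rfl)⟩
      · exact ⟨hbc, (satm_or _ _ _).mpr (Or.inr rfl)⟩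
  rwa [this] at hY

theorem singletonN {a : ZFSet} (ha : a ∈ N) : ({a} : ZFSet) ∈ N := by
  have := pairsetN hN ha ha
  rwa [ZFSet.pair_eq_singleton] at this

theorem kpairN {a b : ZFSet} (ha : a ∈ N) (hb : b ∈ N) : ZFSet.pair a b ∈ N := by
  unfold ZFSet.pair
  exact pairsetN hN (singletonN hN ha) (pairsetN hN ha hb)

/-- Union closure. -/
theorem sUnionN {X : ZFSet} (hX : X ∈ N) : (⋃₀ X : ZFSet) ∈ N := by
  have hun := hN.2.2.2.1 ![X] (by intro i; fin_cases i; simpa)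
  unfold axUnion at hun
  rw [satm_ex] at hun
  obtain ⟨u, hu, hbody⟩ := hun
  have hsup : ∀ z, z ∈ (⋃₀ X : ZFSet) → z ∈ u := by
    intro z hz
    rw [ZFSet.mem_sUnion] at hz
    obtain ⟨y, hyX, hzy⟩ := hz
    have hyN : y ∈ N := trN hN hX hyX
    have hzN : z ∈ N := trN hN hyN hzy
    rw [satm_all] at hbody
    have h1 := hbody y hyN
    rw [satm_all] at h1
    have h2 := h1 z hzN
    rw [satm_imp, satm_and] at h2
    simpa [SatM] using h2 ⟨by simpa [SatM], by simpa [SatM] using hyX⟩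
  have hsep := sepN hN (n := 1) (.ex (.and (.mem 0 2) (.mem 1 0))) u ![X] hu
    (by intro i; fin_cases i; simpa)
  obtain ⟨Y, hY, hYc⟩ := hsep
  have : Y = (⋃₀ X : ZFSet) := by
    apply ZFSet.ext
    intro z
    rw [hYc, ZFSet.mem_sUnion]
    constructor
    · rintro ⟨hzu, hzφ⟩
      rw [satm_ex] at hzφ
      obtain ⟨w, hw, hwc⟩ := hzφ
      rw [satm_and] at hwc
      simp only [SatM, Fin.cons_zero, Fin.cons_succ] at hwc
      exact ⟨w, by simpa using hwc.1, hwc.2⟩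
    · rintro ⟨w, hwX, hzw⟩
      refine ⟨hsup z (ZFSet.mem_sUnion.mpr ⟨w, hwX, hzw⟩), ?_⟩
      rw [satm_ex]
      refine ⟨w, trN hN hX hwX, ?_⟩
      rw [satm_and]
      exact ⟨hwX, hzw⟩
  rwa [this] at hY

theorem unionN {a b : ZFSet} (ha : a ∈ N) (hb : b ∈ N) : a ∪ b ∈ N := by
  have h := sUnionN hN (pairsetN hN ha hb)
  have : (⋃₀ ({a, b} : ZFSet) : ZFSet) = a ∪ b := by
    apply ZFSet.ext
    intro z
    rw [ZFSet.mem_sUnion, ZFSet.mem_union]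
    constructor
    · rintro ⟨w, hw, hzw⟩
      rcases ZFSet.mem_pair.mp hw with rfl | rfl
      · exact Or.inl hzw
      · exact Or.inr hzw
    · rintro (h | h)
      · exact ⟨a, ZFSet.mem_pair.mpr (Or.inl rfl), h⟩
      · exact ⟨b, ZFSet.mem_pair.mpr (Or.inr rfl), h⟩
  rwa [this] at h

theorem insertN {a b : ZFSet} (ha : a ∈ N) (hb : b ∈ N) : insert a b ∈ N := by
  have h := unionN hN (singletonN hN ha) hb
  have : ({a} : ZFSet) ∪ b = insert a b := by
    apply ZFSet.ext
    intro z
    rw [ZFSet.mem_union, ZFSet.mem_insert_iff, ZFSet.mem_singleton]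
  rwa [this] at h

/-- Infinity: there is a set in `N` containing all von Neumann naturals. -/
theorem infN : ∃ I ∈ N, (∀ n : ℕ, natZF n ∈ I) := by
  have hinf := hN.2.2.2.2.2.1 ![] (by intro i; exact absurd i.2 (by omega))
  unfold axInf at hinf
  rw [satm_ex] at hinf
  obtain ⟨I, hI, hbody⟩ := hinf
  rw [satm_and] at hbody
  obtain ⟨hzero, hsucc⟩ := hbody
  refine ⟨I, hI, ?_⟩
  have h0 : (∅ : ZFSet) ∈ I := by
    rw [satm_ex] at hzero
    obtain ⟨e, heN, hec⟩ := hzero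
    rw [satm_and] at hec
    obtain ⟨heI, hee⟩ := hec
    simp only [SatM, Fin.cons_zero, Fin.cons_succ] at heI
    rw [satm_all] at hee
    have : e = (∅ : ZFSet) := by
      rw [ZFSet.eq_empty]
      intro y hy
      have hyN : y ∈ N := trN hN (trN hN hI heI) hy
      have := hee y hyN
      rw [satm_neg] at this
      exact this (by simpa [SatM] using hy)
    rwa [this] at heI
  have hstep : ∀ y, y ∈ I → insert y y ∈ I := by
    intro y hyI
    have hyN : y ∈ N := trN hN hI hyI
    rw [satm_all] at hsucc
    have h1 := hsucc y hyN
    rw [satm_imp] at h1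
    have h2 := h1 (by simpa [SatM] using hyI)
    rw [satm_ex] at h2
    obtain ⟨z, hzN, hzc⟩ := h2
    rw [satm_and] at hzc
    obtain ⟨hzI, hzc2⟩ := hzc
    rw [satm_and] at hzc2
    obtain ⟨hyz, hext⟩ := hzc2
    simp only [SatM, Fin.cons_zero, Fin.cons_succ] at hzI hyz
    have : z = insert y y := by
      apply ZFSet.ext
      intro w
      rw [ZFSet.mem_insert_iff]
      rw [satm_all] at hext
      constructor
      · intro hw
        have hwN : w ∈ N := trN hN hzN hw
        have := hext w hwN
        rw [satm_iff] at this
        have h3 := this.mp (by simpa [SatM] using hw)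
        rw [satm_or] at h3
        rcases h3 with h3 | h3
        · right; simpa [SatM] using h3
        · left; simpa [SatM] using h3
      · intro hw
        have hwN : w ∈ N := by
          rcases hw with rfl | hw
          · exact hyN
          · exact trN hN hyN hw
        have := hext w hwN
        rw [satm_iff] at this
        refine this.mpr ?_
        rw [satm_or]
        rcases hw with rfl | hw
        · exact Or.inr rfl
        · exact Or.inl hw
    rwa [this] at hzI
  intro n
  induction n with
  | zero => exact h0
  | succ n ih => exact hstep _ ih

theorem natZFN : ∀ n : ℕ, natZF n ∈ N := by
  obtain ⟨I, hI, hmem⟩ := infN hN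
  exact fun n => trN hN hI (hmem n)

theorem emptyN : (∅ : ZFSet) ∈ N := by
  obtain ⟨I, hI, _⟩ := infN hN
  have hsep := sepN hN (n := 0) (.neg (.eq 0 0)) I ![] hI
    (by intro i; exact absurd i.2 (by omega))
  obtain ⟨Y, hY, hYc⟩ := hsep
  have : Y = (∅ : ZFSet) := by
    rw [ZFSet.eq_empty]
    intro y hy
    have := (hYc y).mp hy
    exact this.2 (by simp [SatM])
  rwa [this] at hY

/-- Power set closure (relativized). -/
theorem powN {X : ZFSet} (hX : X ∈ N) : ∃ Y ∈ N, ∀ z, z ∈ Y ↔ z ∈ N ∧ z ⊆ X := by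
  have hpow := hN.2.2.2.2.1 ![X] (by intro i; fin_cases i; simpa)
  unfold axPower at hpow
  rw [satm_ex] at hpow
  obtain ⟨u, hu, hbody⟩ := hpow
  rw [satm_all] at hbody
  have hsup : ∀ z, z ∈ N → z ⊆ X → z ∈ u := by
    intro z hzN hzX
    have h1 := hbody z hzN
    rw [satm_imp] at h1
    have h2 : SatM N (.all (.imp (.mem 0 1) (.mem 0 3)))
        (Fin.cons z (Fin.cons u ![X])) := by
      rw [satm_all]
      intro w hwN
      rw [satm_imp]
      intro hw
      simp only [SatM, Fin.cons_zero, Fin.cons_succ] at hw ⊢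
      simpa using hzX hw
    simpa [SatM] using h1 h2
  have hsep := sepN hN (n := 1) (.all (.imp (.mem 0 1) (.mem 0 2))) u ![X] hu
    (by intro i; fin_cases i; simpa)
  obtain ⟨Y, hY, hYc⟩ := hsep
  refine ⟨Y, hY, fun z => ?_⟩
  rw [hYc]
  constructor
  · rintro ⟨hzu, hzφ⟩
    have hzN : z ∈ N := trN hN hu hzu
    refine ⟨hzN, ?_⟩
    intro w hw
    rw [satm_all] at hzφ
    have := hzφ w (trN hN hzN hw)
    rw [satm_imp] at this
    simpa [SatM] using this (by simpa [SatM] using hw)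
  · rintro ⟨hzN, hzX⟩
    refine ⟨hsup z hzN hzX, ?_⟩
    rw [satm_all]
    intro w hwN
    rw [satm_imp]
    intro hw
    simp only [SatM, Fin.cons_zero, Fin.cons_succ] at hw ⊢
    simpa using hzX hw

end Model


/-! ### Internal formulas: basic predicates -/

section Formulas

variable {N : ZFSet} (hN : IsTransModelZFC N)

/-- `u = {x}` -/
def SINGF {n : ℕ} (x u : Fin n) : Fml n :=
  .all (.iff (.mem 0 u.succ) (.eq 0 x.succ))

/-- `u = {x, y}` -/
def UPAIRF {n : ℕ} (x y u : Fin n) : Fml n :=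
  .all (.iff (.mem 0 u.succ) (.or (.eq 0 x.succ) (.eq 0 y.succ)))

/-- `z = ⟨x, y⟩` (Kuratowski) -/
def KPAIRF {n : ℕ} (x y z : Fin n) : Fml n :=
  .ex (.ex (.and (SINGF x.succ.succ (Fin.succ 0))
    (.and (UPAIRF x.succ.succ y.succ.succ 0)
      (UPAIRF (Fin.succ 0) 0 z.succ.succ))))

/-- `⟨x, y⟩ ∈ A` -/
def MEMKPF {n : ℕ} (x y A : Fin n) : Fml n :=
  .ex (.and (KPAIRF x.succ y.succ 0) (.mem 0 A.succ))

/-- `⟨c, ⟨i, m⟩⟩ ∈ A` -/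
def DECF {n : ℕ} (c i m A : Fin n) : Fml n :=
  .ex (.and (KPAIRF i.succ m.succ 0) (MEMKPF c.succ 0 A.succ))

/-- `x ⊆ y` -/
def SUBF {n : ℕ} (x y : Fin n) : Fml n :=
  .all (.imp (.mem 0 x.succ) (.mem 0 y.succ))

/-- `x` is transitive -/
def TRANSF {n : ℕ} (x : Fin n) : Fml n :=
  .all (.imp (.mem 0 x.succ)
    (.all (.imp (.mem 0 (Fin.succ 0)) (.mem 0 x.succ.succ))))

/-- `x = ∅` -/
def EMPTYF {n : ℕ} (x : Fin n) : Fml n :=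
  .all (.neg (.mem 0 x.succ))

/-- `y = z ∪ {z}` -/
def SUCCF {n : ℕ} (z y : Fin n) : Fml n :=
  .all (.iff (.mem 0 y.succ) (.or (.mem 0 z.succ) (.eq 0 z.succ)))

/-- `y = ∅ ∨ ∃ z ∈ y, y = z ∪ {z}` -/
def NBF {n : ℕ} (y : Fin n) : Fml n :=
  .or (EMPTYF y) (.ex (.and (.mem 0 y.succ) (SUCCF 0 y.succ)))

/-- `NB y`: `y` is empty or a successor. -/
def NB (y : ZFSet) : Prop := y = ∅ ∨ ∃ z ∈ y, y = insert z z

theorem consN {N z : ZFSet} {n : ℕ} {v : Fin n → ZFSet} (hz : z ∈ N)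
    (hv : ∀ i, v i ∈ N) : ∀ i, (Fin.cons z v : Fin (n+1) → ZFSet) i ∈ N := by
  intro i
  cases i using Fin.cases with
  | zero => exact hz
  | succ j => simpa using hv j

include hN

theorem sem_SINGF {n : ℕ} (x u : Fin n) (v : Fin n → ZFSet) (hv : ∀ i, v i ∈ N) :
    SatM N (SINGF x u) v ↔ v u = ({v x} : ZFSet) := by
  rw [SINGF, satm_all]
  simp only [satm_iff]
  simp only [SatM, Fin.cons_zero, Fin.cons_succ]
  constructor
  · intro h
    apply ZFSet.ext
    intro z
    rw [ZFSet.mem_singleton]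
    constructor
    · intro hz; exact (h z (trN hN (hv u) hz)).mp hz
    · rintro rfl; exact (h (v x) (hv x)).mpr rfl
  · intro h z _
    rw [h, ZFSet.mem_singleton]

theorem sem_UPAIRF {n : ℕ} (x y u : Fin n) (v : Fin n → ZFSet) (hv : ∀ i, v i ∈ N) :
    SatM N (UPAIRF x y u) v ↔ v u = ({v x, v y} : ZFSet) := by
  rw [UPAIRF, satm_all]
  simp only [satm_iff]
  simp only [satm_or]
  simp only [SatM, Fin.cons_zero, Fin.cons_succ]
  constructor
  · intro h
    apply ZFSet.ext
    intro z
    rw [ZFSet.mem_pair]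
    constructor
    · intro hz; exact (h z (trN hN (hv u) hz)).mp hz
    · rintro (rfl | rfl)
      · exact (h (v x) (hv x)).mpr (Or.inl rfl)
      · exact (h (v y) (hv y)).mpr (Or.inr rfl)
  · intro h z _
    rw [h, ZFSet.mem_pair]

theorem sem_KPAIRF {n : ℕ} (x y z : Fin n) (v : Fin n → ZFSet) (hv : ∀ i, v i ∈ N) :
    SatM N (KPAIRF x y z) v ↔ v z = ZFSet.pair (v x) (v y) := by
  rw [KPAIRF, satm_ex]
  constructor
  · rintro ⟨u, huN, hu⟩
    rw [satm_ex] at hu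
    obtain ⟨w, hwN, hw⟩ := hu
    rw [satm_and] at hw
    obtain ⟨h1, hw⟩ := hw
    rw [satm_and] at hw
    obtain ⟨h2, h3⟩ := hw
    have hv2 := consN hwN (consN huN hv)
    rw [sem_SINGF hN _ _ _ hv2] at h1
    rw [sem_UPAIRF hN _ _ _ _ hv2] at h2
    rw [sem_UPAIRF hN _ _ _ _ hv2] at h3
    simp only [Fin.cons_zero, Fin.cons_succ] at h1 h2 h3
    rw [ZFSet.pair, ← h1, ← h2, ← h3]
  · intro hz
    refine ⟨{v x}, singletonN hN (hv x), ?_⟩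
    rw [satm_ex]
    refine ⟨{v x, v y}, pairsetN hN (hv x) (hv y), ?_⟩
    have hv2 := consN (pairsetN hN (hv x) (hv y)) (consN (singletonN hN (hv x)) hv)
    rw [satm_and, satm_and, sem_SINGF hN _ _ _ hv2, sem_UPAIRF hN _ _ _ _ hv2,
      sem_UPAIRF hN _ _ _ _ hv2]
    refine ⟨by simp, by simp, by simp [hz, ZFSet.pair]⟩

theorem sem_MEMKPF {n : ℕ} (x y A : Fin n) (v : Fin n → ZFSet) (hv : ∀ i, v i ∈ N) :
    SatM N (MEMKPF x y A) v ↔ ZFSet.pair (v x) (v y) ∈ v A := by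
  rw [MEMKPF, satm_ex]
  constructor
  · rintro ⟨z, hzN, hz⟩
    rw [satm_and] at hz
    obtain ⟨h1, h2⟩ := hz
    rw [sem_KPAIRF hN _ _ _ _ (consN hzN hv)] at h1
    simp only [Fin.cons_zero, Fin.cons_succ] at h1 h2
    rwa [← h1]
  · intro h
    refine ⟨ZFSet.pair (v x) (v y), kpairN hN (hv x) (hv y), ?_⟩
    rw [satm_and, sem_KPAIRF hN _ _ _ _ (consN (kpairN hN (hv x) (hv y)) hv)]
    exact ⟨by simp, by simpa [SatM] using h⟩

theorem sem_DECF {n : ℕ} (c i m A : Fin n) (v : Fin n → ZFSet) (hv : ∀ i, v i ∈ N) :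
    SatM N (DECF c i m A) v ↔
      ZFSet.pair (v c) (ZFSet.pair (v i) (v m)) ∈ v A := by
  rw [DECF, satm_ex]
  constructor
  · rintro ⟨z, hzN, hz⟩
    rw [satm_and] at hz
    obtain ⟨h1, h2⟩ := hz
    rw [sem_KPAIRF hN _ _ _ _ (consN hzN hv)] at h1
    rw [sem_MEMKPF hN _ _ _ _ (consN hzN hv)] at h2
    simp only [Fin.cons_zero, Fin.cons_succ] at h1 h2
    rwa [← h1]
  · intro h
    have hp : ZFSet.pair (v i) (v m) ∈ N := kpairN hN (hv i) (hv m)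
    refine ⟨ZFSet.pair (v i) (v m), hp, ?_⟩
    rw [satm_and, sem_KPAIRF hN _ _ _ _ (consN hp hv), sem_MEMKPF hN _ _ _ _ (consN hp hv)]
    exact ⟨by simp, by simpa using h⟩

theorem sem_SUBF {n : ℕ} (x y : Fin n) (v : Fin n → ZFSet) (hv : ∀ i, v i ∈ N) :
    SatM N (SUBF x y) v ↔ v x ⊆ v y := by
  rw [SUBF, satm_all]
  simp only [satm_imp, SatM, Fin.cons_zero, Fin.cons_succ]
  constructor
  · intro h z hz
    exact h z (trN hN (hv x) hz) hz
  · intro h z _ hz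
    exact h hz

theorem sem_TRANSF {n : ℕ} (x : Fin n) (v : Fin n → ZFSet) (hv : ∀ i, v i ∈ N) :
    SatM N (TRANSF x) v ↔ (v x).IsTransitive := by
  rw [TRANSF, satm_all]
  simp only [satm_imp, satm_all, SatM, Fin.cons_zero, Fin.cons_succ]
  constructor
  · intro h y hy z hz
    have hyN : y ∈ N := trN hN (hv x) hy
    exact h y hyN hy z (trN hN hyN hz) hz
  · intro h y _ hy z _ hz
    exact h y hy hz

theorem sem_EMPTYF {n : ℕ} (x : Fin n) (v : Fin n → ZFSet) (hv : ∀ i, v i ∈ N) :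
    SatM N (EMPTYF x) v ↔ v x = ∅ := by
  rw [EMPTYF, satm_all]
  simp only [satm_neg, SatM, Fin.cons_zero, Fin.cons_succ]
  constructor
  · intro h
    rw [ZFSet.eq_empty]
    intro z hz
    exact h z (trN hN (hv x) hz) hz
  · intro h z _ hz
    rw [h] at hz
    exact ZFSet.notMem_empty z hz

theorem sem_SUCCF {n : ℕ} (z y : Fin n) (v : Fin n → ZFSet) (hv : ∀ i, v i ∈ N) :
    SatM N (SUCCF z y) v ↔ v y = insert (v z) (v z) := by
  rw [SUCCF, satm_all]
  simp only [satm_iff]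
  simp only [satm_or]
  simp only [SatM, Fin.cons_zero, Fin.cons_succ]
  constructor
  · intro h
    apply ZFSet.ext
    intro w
    rw [ZFSet.mem_insert_iff]
    constructor
    · intro hw
      rcases (h w (trN hN (hv y) hw)).mp hw with h1 | h1
      · exact Or.inr h1
      · exact Or.inl h1
    · rintro (rfl | hw)
      · exact (h _ (hv z)).mpr (Or.inr rfl)
      · exact (h _ (trN hN (hv z) hw)).mpr (Or.inl hw)
  · intro h w _
    rw [h, ZFSet.mem_insert_iff]
    tauto

theorem sem_NBF {n : ℕ} (y : Fin n) (v : Fin n → ZFSet) (hv : ∀ i, v i ∈ N) :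
    SatM N (NBF y) v ↔ NB (v y) := by
  rw [NBF, satm_or, sem_EMPTYF hN _ _ hv, satm_ex]
  unfold NB
  constructor
  · rintro (h | ⟨z, hzN, hz⟩)
    · exact Or.inl h
    · rw [satm_and] at hz
      obtain ⟨h1, h2⟩ := hz
      rw [sem_SUCCF hN _ _ _ (consN hzN hv)] at h2
      simp only [SatM, Fin.cons_zero, Fin.cons_succ] at h1 h2
      exact Or.inr ⟨z, h1, h2⟩
  · rintro (h | ⟨z, hzy, hze⟩)
    · exact Or.inl h
    · have hzN : z ∈ N := trN hN (hv y) hzy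
      refine Or.inr ⟨z, hzN, ?_⟩
      rw [satm_and, sem_SUCCF hN _ _ _ (consN hzN hv)]
      simp only [SatM, Fin.cons_zero, Fin.cons_succ]
      exact ⟨hzy, hze⟩

end Formulas

/-! ### Characterisation of the naturals, `ω`, and codes of lists in `N` -/

theorem nice_to_natZF : ∀ x : ZFSet, x.IsTransitive → (∀ y ∈ x, y.IsTransitive) →
    NB x → (∀ y ∈ x, NB y) → ∃ n, x = natZF n := by
  intro x
  induction x using ZFSet.inductionOn with
  | _ x ih =>
    intro htr hytr hnb hynb
    rcases hnb with rfl | ⟨z, hz, hxe⟩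
    · exact ⟨0, rfl⟩
    · have hzsub : ∀ y ∈ z, y ∈ x := fun y hy => htr z hz hy
      obtain ⟨m, rfl⟩ := ih z hz (hytr z hz)
        (fun y hy => hytr y (hzsub y hy)) (hynb z hz) (fun y hy => hynb y (hzsub y hy))
      exact ⟨m + 1, hxe⟩

theorem natZF_NB (m : ℕ) : NB (natZF m) := by
  cases m with
  | zero => exact Or.inl rfl
  | succ m => exact Or.inr ⟨natZF m, natZF_mem_natZF (by omega), rfl⟩

theorem natZF_nice (n : ℕ) : (natZF n).IsTransitive ∧ (∀ y ∈ natZF n, y.IsTransitive) ∧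
    NB (natZF n) ∧ ∀ y ∈ natZF n, NB y := by
  refine ⟨natZF_isTransitive n, ?_, natZF_NB n, ?_⟩
  · intro y hy
    rcases mem_natZF.mp hy with ⟨m, _, rfl⟩
    exact natZF_isTransitive m
  · intro y hy
    rcases mem_natZF.mp hy with ⟨m, _, rfl⟩
    exact natZF_NB m

/-- The internal "x is a natural number" formula. -/
def NATF : Fml 1 :=
  .and (TRANSF 0)
    (.and (.all (.imp (.mem 0 (Fin.succ 0)) (TRANSF 0)))
      (.and (NBF 0) (.all (.imp (.mem 0 (Fin.succ 0)) (NBF 0)))))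

section Model2

variable {N : ZFSet} (hN : IsTransModelZFC N)
include hN

theorem sem_NATF (x : ZFSet) (hx : x ∈ N) :
    SatM N NATF (Fin.cons x ![]) ↔ ∃ n, x = natZF n := by
  have hv : ∀ i, (Fin.cons x ![] : Fin 1 → ZFSet) i ∈ N := by
    intro i
    cases i using Fin.cases with
    | zero => exact hx
    | succ j => exact absurd j.2 (by omega)
  rw [NATF, satm_and, satm_and, satm_and, sem_TRANSF hN _ _ hv, sem_NBF hN _ _ hv]
  simp only [Fin.cons_zero]
  constructor
  · rintro ⟨h1, h2, h3, h4⟩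
    apply nice_to_natZF x h1
    · intro y hy
      have hyN : y ∈ N := trN hN hx hy
      rw [satm_all] at h2
      have := h2 y hyN
      rw [satm_imp] at this
      have hs := this hy
      have hv2 : ∀ j, (Fin.cons y (Fin.cons x ![]) : Fin 2 → ZFSet) j ∈ N := by
        intro j
        cases j using Fin.cases with
        | zero => exact hyN
        | succ k => simpa using hv k
      rw [sem_TRANSF hN _ _ hv2] at hs
      simpa using hs
    · exact h3
    · intro y hy
      have hyN : y ∈ N := trN hN hx hy
      rw [satm_all] at h4
      have := h4 y hyN
      rw [satm_imp] at this
      have hs := this hy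
      have hv2 : ∀ j, (Fin.cons y (Fin.cons x ![]) : Fin 2 → ZFSet) j ∈ N := by
        intro j
        cases j using Fin.cases with
        | zero => exact hyN
        | succ k => simpa using hv k
      rw [sem_NBF hN _ _ hv2] at hs
      simpa using hs
  · rintro ⟨n, rfl⟩
    obtain ⟨h1, h2, h3, h4⟩ := natZF_nice n
    refine ⟨h1, ?_, h3, ?_⟩
    · rw [satm_all]
      intro y hyN
      rw [satm_imp]
      intro hy
      have hv2 : ∀ j, (Fin.cons y (Fin.cons (natZF n) ![]) : Fin 2 → ZFSet) j ∈ N := by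
        intro j
        cases j using Fin.cases with
        | zero => exact hyN
        | succ k => simpa using hv k
      rw [sem_TRANSF hN _ _ hv2]
      exact h2 y hy
    · rw [satm_all]
      intro y hyN
      rw [satm_imp]
      intro hy
      have hv2 : ∀ j, (Fin.cons y (Fin.cons (natZF n) ![]) : Fin 2 → ZFSet) j ∈ N := by
        intro j
        cases j using Fin.cases with
        | zero => exact hyN
        | succ k => simpa using hv k
      rw [sem_NBF hN _ _ hv2]
      exact h4 y hy

/-- The internal set of natural numbers. -/
theorem omegaN : ∃ W ∈ N, ∀ z, z ∈ W ↔ ∃ n, z = natZF n := by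
  obtain ⟨I, hI, hmem⟩ := infN hN
  obtain ⟨W, hW, hWc⟩ := sepN hN (n := 0) NATF I ![] hI (by intro i; exact absurd i.2 (by omega))
  refine ⟨W, hW, fun z => ?_⟩
  rw [hWc]
  constructor
  · rintro ⟨hzI, hsat⟩
    exact (sem_NATF hN z (trN hN hI hzI)).mp hsat
  · rintro ⟨n, rfl⟩
    exact ⟨hmem n, (sem_NATF hN (natZF n) (natZFN hN n)).mpr ⟨n, rfl⟩⟩

end Model2

theorem listZF_nil : listZF [] = ∅ := by
  rw [ZFSet.eq_empty]
  intro y hy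
  rcases mem_listZF.mp hy with ⟨i, hi, _⟩
  simp at hi

theorem listZF_concat (l : List ℕ) (a : ℕ) :
    listZF (l ++ [a]) = insert (ZFSet.pair (natZF l.length) (natZF a)) (listZF l) := by
  apply ZFSet.ext
  intro z
  rw [mem_listZF, ZFSet.mem_insert_iff, mem_listZF]
  constructor
  · rintro ⟨i, hi, rfl⟩
    simp only [List.length_append, List.length_singleton] at hi
    rcases Nat.lt_succ_iff_lt_or_eq.mp hi with h | rfl
    · right
      refine ⟨i, h, ?_⟩
      rw [getD_eq (by simpa using hi), getD_eq h, List.getElem_append_left h]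
    · left
      rw [getD_eq (by simpa using hi)]
      congr 2
      simp
  · rintro (rfl | ⟨i, hi, rfl⟩)
    · refine ⟨l.length, by simp, ?_⟩
      rw [getD_eq (by simp)]
      congr 2
      simp
    · refine ⟨i, by simp; omega, ?_⟩
      rw [getD_eq hi, getD_eq (by simp; omega), List.getElem_append_left hi]

section Model3

variable {N : ZFSet} (hN : IsTransModelZFC N)
include hN

theorem listZFN (l : List ℕ) : listZF l ∈ N := by
  induction l using List.reverseRecOn with
  | nil => rw [listZF_nil]; exact emptyN hN
  | append_singleton l a ih =>
    rw [listZF_concat]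
    exact insertN hN (kpairN hN (natZFN hN _) (natZFN hN _)) ih

end Model3


/-! ### The internal set of all (codes of) finite sequences of naturals -/

/-- Clause: every element of `t` is a pair `⟨i, m⟩` with `i ∈ ln`, `m ∈ w`
(context: variable 0 is `ln`). -/
def SEQB {n : ℕ} (ln t w : Fin n) : Fml n :=
  .all (.imp (.mem 0 t.succ)
    (.ex (.ex (.and (.mem (Fin.succ 0) ln.succ.succ.succ)
      (.and (.mem 0 w.succ.succ.succ)
        (KPAIRF (Fin.succ 0) 0 (Fin.succ (Fin.succ 0))))))))

/-- Clause: every `i ∈ ln` is in the domain of `t`. -/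
def SEQC {n : ℕ} (ln t : Fin n) : Fml n :=
  .all (.imp (.mem 0 ln.succ)
    (.ex (.and (.mem 0 t.succ.succ)
      (.ex (KPAIRF (Fin.succ (Fin.succ 0)) 0 (Fin.succ 0))))))

/-- Clause: `t` is functional. -/
def SEQD {n : ℕ} (t : Fin n) : Fml n :=
  .all (.imp (.mem 0 t.succ)
    (.all (.imp (.mem 0 t.succ.succ)
      (.all (.all (.all
        (.imp (KPAIRF (Fin.succ (Fin.succ 0)) (Fin.succ 0)
                (Fin.succ (Fin.succ (Fin.succ (Fin.succ 0)))))
          (.imp (KPAIRF (Fin.succ (Fin.succ 0)) 0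
                  (Fin.succ (Fin.succ (Fin.succ 0))))
            (.eq (Fin.succ 0) 0)))))))))

/-- `t` is a finite sequence of naturals (a function with domain some `ln ∈ ω ~ w`,
values in `ω ~ w`). -/
def SEQF {n : ℕ} (t w : Fin n) : Fml n :=
  .ex (.and (.mem 0 w.succ)
    (.and (SEQB 0 t.succ w.succ)
      (.and (SEQC 0 t.succ) (SEQD t.succ))))

section ModelSeq

variable {N : ZFSet} (hN : IsTransModelZFC N)
include hN

theorem sem_SEQF {n : ℕ} (t w : Fin n) (v : Fin n → ZFSet) (hv : ∀ i, v i ∈ N)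
    (hw : ∀ z : ZFSet, z ∈ v w ↔ ∃ k : ℕ, z = natZF k) :
    SatM N (SEQF t w) v ↔ ∃ l : List ℕ, v t = listZF l := by
  rw [SEQF, satm_ex]
  constructor
  · rintro ⟨ln, hlnN, hsat⟩
    rw [satm_and] at hsat
    obtain ⟨h1, hsat⟩ := hsat
    rw [satm_and] at hsat
    obtain ⟨hC2, hsat⟩ := hsat
    rw [satm_and] at hsat
    obtain ⟨hC3, hC4⟩ := hsat
    have hln : ln ∈ v w := h1
    obtain ⟨L, rfl⟩ := (hw ln).mp hln
    rw [SEQB, satm_all] at hC2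
    rw [SEQC, satm_all] at hC3
    rw [SEQD, satm_all] at hC4
    -- C2 in usable form
    have hC2' : ∀ z, z ∈ v t → ∃ i m : ℕ, i < L ∧
        z = ZFSet.pair (natZF i) (natZF m) := by
      intro z hz
      have hzN : z ∈ N := trN hN (hv t) hz
      have h2 := hC2 z hzN
      rw [satm_imp] at h2
      have h3 := h2 hz
      rw [satm_ex] at h3
      obtain ⟨i, hiN, h3⟩ := h3
      rw [satm_ex] at h3
      obtain ⟨m, hmN, h3⟩ := h3
      rw [satm_and] at h3
      obtain ⟨hi, h3⟩ := h3
      rw [satm_and] at h3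
      obtain ⟨hm, hkp⟩ := h3
      rw [sem_KPAIRF hN _ _ _ _
        (consN hmN (consN hiN (consN hzN (consN hlnN hv))))] at hkp
      simp only [SatM, Fin.cons_zero, Fin.cons_succ] at hi hm hkp
      obtain ⟨iN, hiL, rfl⟩ := mem_natZF.mp hi
      obtain ⟨mN, rfl⟩ := (hw m).mp hm
      exact ⟨iN, mN, hiL, hkp⟩
    -- C3 in usable form
    have hC3' : ∀ j : ℕ, j < L → ∃ mv : ℕ,
        ZFSet.pair (natZF j) (natZF mv) ∈ v t := by
      intro j hj
      have hjN := natZFN hN j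
      have h2 := hC3 (natZF j) hjN
      rw [satm_imp] at h2
      have h3 := h2 (natZF_mem_natZF hj)
      rw [satm_ex] at h3
      obtain ⟨z, hzN, h3⟩ := h3
      rw [satm_and] at h3
      obtain ⟨hzt, h3⟩ := h3
      rw [satm_ex] at h3
      obtain ⟨m, hmN, hkp⟩ := h3
      rw [sem_KPAIRF hN _ _ _ _
        (consN hmN (consN hzN (consN hjN (consN hlnN hv))))] at hkp
      simp only [SatM, Fin.cons_zero, Fin.cons_succ] at hzt hkp
      obtain ⟨i', m', _, heq⟩ := hC2' z hzt
      rw [hkp] at heq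
      obtain ⟨h4, h5⟩ := ZFSet.pair_injective heq
      refine ⟨m', ?_⟩
      rw [← h5, ← hkp]
      exact hzt
    -- C4 in usable form
    have hC4' : ∀ (i m m' : ℕ), ZFSet.pair (natZF i) (natZF m) ∈ v t →
        ZFSet.pair (natZF i) (natZF m') ∈ v t → m = m' := by
      intro i m m' ha hb
      have haN : ZFSet.pair (natZF i) (natZF m) ∈ N := trN hN (hv t) ha
      have hbN : ZFSet.pair (natZF i) (natZF m') ∈ N := trN hN (hv t) hb
      have h2 := hC4 _ haN
      rw [satm_imp] at h2
      have h3 := h2 ha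
      rw [satm_all] at h3
      have h4 := h3 _ hbN
      rw [satm_imp] at h4
      have h5 := h4 hb
      rw [satm_all] at h5
      have h6 := h5 (natZF i) (natZFN hN i)
      rw [satm_all] at h6
      have h7 := h6 (natZF m) (natZFN hN m)
      rw [satm_all] at h7
      have h8 := h7 (natZF m') (natZFN hN m')
      rw [satm_imp, satm_imp] at h8
      have hvbig := consN (natZFN hN m') (consN (natZFN hN m) (consN (natZFN hN i)
        (consN hbN (consN haN (consN hlnN hv)))))
      rw [sem_KPAIRF hN _ _ _ _ hvbig, sem_KPAIRF hN _ _ _ _ hvbig] at h8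
      simp only [Fin.cons_zero, Fin.cons_succ] at h8
      have h9 := h8 (by trivial) (by trivial)
      have h10 : natZF m = natZF m' := h9
      exact natZF_injective h10
    -- build the list
    have hchoice : ∀ j : Fin L, ∃ mv : ℕ,
        ZFSet.pair (natZF j.1) (natZF mv) ∈ v t := fun j => hC3' j.1 j.2
    set f : Fin L → ℕ := fun j => Classical.choose (hchoice j) with hf
    have hfspec : ∀ j : Fin L, ZFSet.pair (natZF j.1) (natZF (f j)) ∈ v t :=
      fun j => Classical.choose_spec (hchoice j)
    refine ⟨List.ofFn f, ?_⟩
    apply ZFSet.ext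
    intro z
    rw [mem_listZF]
    constructor
    · intro hz
      obtain ⟨i, m, hiL, rfl⟩ := hC2' z hz
      refine ⟨i, by simpa using hiL, ?_⟩
      have : m = f ⟨i, hiL⟩ := hC4' i m (f ⟨i, hiL⟩) hz (hfspec ⟨i, hiL⟩)
      rw [this]
      congr 1
      rw [getD_eq (by simpa using hiL)]
      simp
    · rintro ⟨i, hi, rfl⟩
      have hiL : i < L := by simpa using hi
      have := hfspec ⟨i, hiL⟩
      rw [getD_eq hi]
      simpa using this
  · rintro ⟨l, hteq⟩
    refine ⟨natZF l.length, natZFN hN _, ?_⟩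
    rw [satm_and]
    refine ⟨(hw _).mpr ⟨l.length, rfl⟩, ?_⟩
    rw [satm_and]
    have hlnN := natZFN hN l.length
    constructor
    · -- C2
      rw [SEQB, satm_all]
      intro z hzN
      rw [satm_imp]
      intro hzt
      have hzl : z ∈ listZF l := by
        rw [← hteq]
        exact hzt
      obtain ⟨i, hi, rfl⟩ := mem_listZF.mp hzl
      rw [satm_ex]
      refine ⟨natZF i, natZFN hN i, ?_⟩
      rw [satm_ex]
      refine ⟨natZF (l.getD i 0), natZFN hN _, ?_⟩
      rw [satm_and]
      refine ⟨natZF_mem_natZF hi, ?_⟩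
      rw [satm_and]
      refine ⟨(hw _).mpr ⟨_, rfl⟩, ?_⟩
      rw [sem_KPAIRF hN _ _ _ _ (consN (natZFN hN _) (consN (natZFN hN i)
        (consN hzN (consN hlnN hv))))]
      simp only [Fin.cons_zero, Fin.cons_succ]
    · rw [satm_and]
      constructor
      · -- C3
        rw [SEQC, satm_all]
        intro i hiN
        rw [satm_imp]
        intro hiln
        have hiln' : i ∈ natZF l.length := hiln
        obtain ⟨j, hj, rfl⟩ := mem_natZF.mp hiln'
        rw [satm_ex]
        have hzmem : ZFSet.pair (natZF j) (natZF (l.getD j 0)) ∈ v t := by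
          rw [hteq]
          exact mem_listZF.mpr ⟨j, hj, rfl⟩
        refine ⟨ZFSet.pair (natZF j) (natZF (l.getD j 0)), trN hN (hv t) hzmem, ?_⟩
        rw [satm_and]
        refine ⟨hzmem, ?_⟩
        rw [satm_ex]
        refine ⟨natZF (l.getD j 0), natZFN hN _, ?_⟩
        rw [sem_KPAIRF hN _ _ _ _ (consN (natZFN hN _) (consN (trN hN (hv t) hzmem)
          (consN hiN (consN hlnN hv))))]
        simp only [Fin.cons_zero, Fin.cons_succ]
      · -- C4
        rw [SEQD, satm_all]
        intro z1 hz1N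
        rw [satm_imp]
        intro hz1t
        rw [satm_all]
        intro z2 hz2N
        rw [satm_imp]
        intro hz2t
        rw [satm_all]
        intro i hiN
        rw [satm_all]
        intro m1 hm1N
        rw [satm_all]
        intro m2 hm2N
        rw [satm_imp, satm_imp]
        have hvbig := consN hm2N (consN hm1N (consN hiN
          (consN hz2N (consN hz1N (consN hlnN hv)))))
        rw [sem_KPAIRF hN _ _ _ _ hvbig, sem_KPAIRF hN _ _ _ _ hvbig]
        simp only [Fin.cons_zero, Fin.cons_succ]
        intro h1 h2
        have hz1l : z1 ∈ listZF l := by rw [← hteq]; exact hz1t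
        have hz2l : z2 ∈ listZF l := by rw [← hteq]; exact hz2t
        obtain ⟨a, ha, hza⟩ := mem_listZF.mp hz1l
        obtain ⟨b, hb, hzb⟩ := mem_listZF.mp hz2l
        rw [h1] at hza
        rw [h2] at hzb
        obtain ⟨ha1, ha2⟩ := ZFSet.pair_injective hza
        obtain ⟨hb1, hb2⟩ := ZFSet.pair_injective hzb
        have hab : a = b := natZF_injective (ha1.symm.trans hb1)
        show m1 = m2
        rw [ha2, hb2, hab]

/-- The set of codes of finite sequences of naturals is (exactly realised) in `N`. -/
theorem seqSetN : ∃ S ∈ N, ∀ z, z ∈ S ↔ ∃ l : List ℕ, z = listZF l := by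
  obtain ⟨W, hW, hWc⟩ := omegaN hN
  obtain ⟨P1, hP1, hP1c⟩ := powN hN hW
  obtain ⟨P2, hP2, hP2c⟩ := powN hN hP1
  obtain ⟨P3, hP3, hP3c⟩ := powN hN hP2
  obtain ⟨S, hS, hSc⟩ := sepN hN (n := 1) (SEQF 0 1) P3 ![W] hP3
    (by intro i; fin_cases i; simpa)
  refine ⟨S, hS, fun z => ?_⟩
  rw [hSc]
  have hWv : ∀ i, (![W] : Fin 1 → ZFSet) i ∈ N := by intro i; fin_cases i; simpa
  constructor
  · rintro ⟨hzP3, hsat⟩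
    have hzN : z ∈ N := trN hN hP3 hzP3
    have := (sem_SEQF hN (0 : Fin 2) 1 _ (consN hzN hWv) (fun u => hWc u)).mp hsat
    exact this
  · rintro ⟨l, rfl⟩
    have hzN : listZF l ∈ N := listZFN hN l
    constructor
    · rw [hP3c]
      refine ⟨hzN, ?_⟩
      intro pr hpr
      obtain ⟨i, hi, rfl⟩ := mem_listZF.mp hpr
      have hprN : ZFSet.pair (natZF i) (natZF (l.getD i 0)) ∈ N :=
        kpairN hN (natZFN hN _) (natZFN hN _)
      rw [hP2c]
      refine ⟨hprN, ?_⟩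
      intro u hu
      rw [ZFSet.pair] at hu
      rw [hP1c]
      rcases ZFSet.mem_pair.mp hu with rfl | rfl
      · refine ⟨singletonN hN (natZFN hN _), ?_⟩
        intro q hq
        rw [ZFSet.mem_singleton] at hq
        subst hq
        rw [hWc]
        exact ⟨_, rfl⟩
      · refine ⟨pairsetN hN (natZFN hN _) (natZFN hN _), ?_⟩
        intro q hq
        rcases ZFSet.mem_pair.mp hq with rfl | rfl <;>
          · rw [hWc]; exact ⟨_, rfl⟩
    · exact (sem_SEQF hN (0 : Fin 2) 1 _ (consN hzN hWv) (fun u => hWc u)).mpr ⟨l, rfl⟩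

end ModelSeq


/-! ### Decoding the poset codes -/

section Poset

variable {P : Type} [Preorder P] {cP : P → ZFSet} {Dec : P → ℕ → ℕ → Prop}

theorem mem_rangecP {x : ZFSet} : x ∈ ZFSet.range cP ↔ ∃ a : P, cP a = x := by
  rw [ZFSet.mem_range]

theorem mem_ordZF {z : ZFSet} :
    z ∈ ordZF cP ↔ ∃ a b : P, a ≤ b ∧ z = ZFSet.pair (cP a) (cP b) := by
  unfold ordZF
  rw [ZFSet.mem_range]
  constructor
  · rintro ⟨⟨⟨a, b⟩, hab⟩, rfl⟩
    exact ⟨a, b, hab, rfl⟩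
  · rintro ⟨a, b, hab, rfl⟩
    exact ⟨⟨⟨a, b⟩, hab⟩, rfl⟩

theorem pair_mem_ordZF (hcP : Function.Injective cP) {a b : P} :
    ZFSet.pair (cP a) (cP b) ∈ ordZF cP ↔ a ≤ b := by
  rw [mem_ordZF]
  constructor
  · rintro ⟨a', b', hab, heq⟩
    obtain ⟨h1, h2⟩ := ZFSet.pair_injective heq
    rwa [hcP h1, hcP h2]
  · intro h
    exact ⟨a, b, h, rfl⟩

theorem mem_decZF {z : ZFSet} :
    z ∈ decZF cP Dec ↔ ∃ (a : P) (i m : ℕ), Dec a i m ∧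
      z = ZFSet.pair (cP a) (ZFSet.pair (natZF i) (natZF m)) := by
  unfold decZF
  rw [ZFSet.mem_range]
  constructor
  · rintro ⟨⟨⟨a, i, m⟩, h⟩, rfl⟩
    exact ⟨a, i, m, h, rfl⟩
  · rintro ⟨a, i, m, h, rfl⟩
    exact ⟨⟨⟨a, i, m⟩, h⟩, rfl⟩

theorem pair_mem_decZF (hcP : Function.Injective cP) {a : P} {i m : ℕ} :
    ZFSet.pair (cP a) (ZFSet.pair (natZF i) (natZF m)) ∈ decZF cP Dec ↔ Dec a i m := by
  rw [mem_decZF]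
  constructor
  · rintro ⟨a', i', m', h, heq⟩
    obtain ⟨h1, h2⟩ := ZFSet.pair_injective heq
    obtain ⟨h3, h4⟩ := ZFSet.pair_injective h2
    rwa [hcP h1, natZF_injective h3, natZF_injective h4]
  · intro h
    exact ⟨a, i, m, h, rfl⟩

theorem mem_subsetZF {D : Set P} {z : ZFSet} :
    z ∈ subsetZF cP D ↔ ∃ d ∈ D, z = cP d := by
  unfold subsetZF
  rw [ZFSet.mem_range]
  constructor
  · rintro ⟨⟨d, hd⟩, rfl⟩
    exact ⟨d, hd, rfl⟩
  · rintro ⟨d, hd, rfl⟩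
    exact ⟨⟨d, hd⟩, rfl⟩

/-- `q` forces the initial segment `tl` of the name: no extension of `q` decides a value
conflicting with `tl`. -/
def FORC (Dec : P → ℕ → ℕ → Prop) (q : P) (tl : List ℕ) : Prop :=
  ∀ c, c ≤ q → ∀ i, i < tl.length → ∀ m, Dec c i m → m = tl.getD i 0

/-- `b` is compatible with the condition `[[tl ⊆ ṙ]]`. -/
def Compat (Dec : P → ℕ → ℕ → Prop) (b : P) (tl : List ℕ) : Prop :=
  ∃ q, q ≤ b ∧ FORC Dec q tl

end Poset

/-! ### The internal forcing formulas -/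

/-- Internal: `∀ c ≤ q, ∀ i m, c decides i as m → ∀ m'', ⟨i,m''⟩ ∈ θ → m = m''`. -/
def FORCF {n : ℕ} (q θ Ord Dc : Fin n) : Fml n :=
  .all (.imp (MEMKPF 0 q.succ Ord.succ)
    (.all (.all (.all
      (.imp (DECF (Fin.succ (Fin.succ (Fin.succ 0))) (Fin.succ (Fin.succ 0))
              (Fin.succ 0) Dc.succ.succ.succ.succ)
        (.imp (MEMKPF (Fin.succ (Fin.succ 0)) 0 θ.succ.succ.succ.succ)
          (.eq (Fin.succ 0) 0)))))))

/-- Internal: `∃ q ≤ b` forcing `θ`. -/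
def COMPATF {n : ℕ} (b θ Ord Dc : Fin n) : Fml n :=
  .ex (.and (MEMKPF 0 b.succ Ord.succ) (FORCF 0 θ.succ Ord.succ Dc.succ))

section PosetSem

variable {N : ZFSet} (hN : IsTransModelZFC N)
variable {P : Type} [Preorder P] {cP : P → ZFSet} (hcP : Function.Injective cP)
  (hPM : ZFSet.range cP ∈ N) {Dec : P → ℕ → ℕ → Prop}
include hN hcP hPM

theorem cPN (a : P) : cP a ∈ N :=
  trN hN hPM (mem_rangecP.mpr ⟨a, rfl⟩)

theorem sem_FORCF {n : ℕ} (q θ Ord Dc : Fin n) (v : Fin n → ZFSet)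
    (hv : ∀ i, v i ∈ N) (q' : P) (tl : List ℕ)
    (hq : v q = cP q') (hθ : v θ = listZF tl) (hOrd : v Ord = ordZF cP)
    (hDc : v Dc = decZF cP Dec) :
    SatM N (FORCF q θ Ord Dc) v ↔ FORC Dec q' tl := by
  rw [FORCF, satm_all]
  constructor
  · intro h c hc i hi m hdec
    have h1 := h (cP c) (cPN hN hcP hPM c)
    rw [satm_imp] at h1
    have hv1 := consN (cPN hN hcP hPM c) hv
    rw [sem_MEMKPF hN _ _ _ _ hv1] at h1
    simp only [Fin.cons_zero, Fin.cons_succ] at h1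
    rw [hq, hOrd] at h1
    have h2 := h1 ((pair_mem_ordZF hcP).mpr hc)
    rw [satm_all] at h2
    have h3 := h2 (natZF i) (natZFN hN i)
    rw [satm_all] at h3
    have h4 := h3 (natZF m) (natZFN hN m)
    rw [satm_all] at h4
    have h5 := h4 (natZF (tl.getD i 0)) (natZFN hN _)
    have hv4 := consN (natZFN hN (tl.getD i 0)) (consN (natZFN hN m)
      (consN (natZFN hN i) hv1))
    rw [satm_imp, satm_imp, sem_DECF hN _ _ _ _ _ hv4, sem_MEMKPF hN _ _ _ _ hv4] at h5
    simp only [Fin.cons_zero, Fin.cons_succ] at h5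
    rw [hDc, hθ] at h5
    have h6 := h5 ((pair_mem_decZF hcP).mpr hdec)
      (mem_listZF.mpr ⟨i, hi, rfl⟩)
    have h7 : natZF m = natZF (tl.getD i 0) := h6
    exact natZF_injective h7
  · intro hforc c hcN
    rw [satm_imp]
    intro hle
    have hv1 := consN hcN hv
    rw [sem_MEMKPF hN _ _ _ _ hv1] at hle
    simp only [Fin.cons_zero, Fin.cons_succ] at hle
    rw [hq, hOrd] at hle
    obtain ⟨a, b, hab, heq⟩ := mem_ordZF.mp hle
    obtain ⟨ha, hb⟩ := ZFSet.pair_injective heq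
    have hbq : b = q' := hcP hb.symm
    subst hbq
    rw [satm_all]
    intro iz hizN
    rw [satm_all]
    intro mz hmzN
    rw [satm_all]
    intro m2z hm2zN
    rw [satm_imp, satm_imp]
    have hv4 := consN hm2zN (consN hmzN (consN hizN hv1))
    rw [sem_DECF hN _ _ _ _ _ hv4, sem_MEMKPF hN _ _ _ _ hv4]
    simp only [Fin.cons_zero, Fin.cons_succ]
    rw [hDc, hθ]
    intro hdec hmem
    obtain ⟨a', i', m', hd, heq'⟩ := mem_decZF.mp hdec
    obtain ⟨ha', hprs⟩ := ZFSet.pair_injective heq'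
    obtain ⟨hi', hm'⟩ := ZFSet.pair_injective hprs
    obtain ⟨j, hj, hji, hjm⟩ := pair_mem_listZF.mp hmem
    have haa : a' = a := hcP (ha'.symm.trans ha)
    have hij : i' = j := natZF_injective ((hi').symm.trans hji)
    have hd' : Dec a' j m' := by rwa [hij] at hd
    have hmv : m' = tl.getD j 0 := hforc a' (by rw [haa]; exact hab) j hj m' hd'
    show mz = m2z
    rw [hm', hjm, hmv]

theorem sem_COMPATF {n : ℕ} (b θ Ord Dc : Fin n) (v : Fin n → ZFSet)
    (hv : ∀ i, v i ∈ N) (b' : P) (tl : List ℕ)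
    (hb : v b = cP b') (hθ : v θ = listZF tl) (hOrd : v Ord = ordZF cP)
    (hDc : v Dc = decZF cP Dec) :
    SatM N (COMPATF b θ Ord Dc) v ↔ Compat Dec b' tl := by
  rw [COMPATF, satm_ex]
  constructor
  · rintro ⟨qz, hqzN, hsat⟩
    rw [satm_and] at hsat
    obtain ⟨h1, h2⟩ := hsat
    have hv1 := consN hqzN hv
    rw [sem_MEMKPF hN _ _ _ _ hv1] at h1
    simp only [Fin.cons_zero, Fin.cons_succ] at h1
    rw [hb, hOrd] at h1
    obtain ⟨a, b2, hab, heq⟩ := mem_ordZF.mp h1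
    obtain ⟨ha, hb2⟩ := ZFSet.pair_injective heq
    have hb2' : b2 = b' := hcP hb2.symm
    subst hb2'
    refine ⟨a, hab, ?_⟩
    rw [sem_FORCF hN hcP hPM (Dec := Dec) _ _ _ _ _ hv1 a tl (by simp [← ha]) (by simp [hθ])
      (by simp [hOrd]) (by simp [hDc])] at h2
    exact h2
  · rintro ⟨q, hq, hforc⟩
    refine ⟨cP q, cPN hN hcP hPM q, ?_⟩
    rw [satm_and]
    have hv1 := consN (cPN hN hcP hPM q) hv
    rw [sem_MEMKPF hN _ _ _ _ hv1]
    simp only [Fin.cons_zero, Fin.cons_succ]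
    rw [hb, hOrd]
    refine ⟨(pair_mem_ordZF hcP).mpr hq, ?_⟩
    rw [sem_FORCF hN hcP hPM (Dec := Dec) _ _ _ _ _ hv1 q tl (by simp) (by simp [hθ])
      (by simp [hOrd]) (by simp [hDc])]
    exact hforc

end PosetSem


/-! ### The rejected-sequences set -/

/-- Internal formula for: every `q ≤ q''` has an extension deciding a value conflicting
with `τ`. -/
def PHIR {n : ℕ} (τ qq Ord Dc : Fin n) : Fml n :=
  .all (.imp (MEMKPF 0 qq.succ Ord.succ)
    (.ex (.and (MEMKPF 0 (Fin.succ 0) Ord.succ.succ)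
      (.ex (.ex (.ex
        (.and (MEMKPF (Fin.succ (Fin.succ 0)) (Fin.succ 0) τ.succ.succ.succ.succ.succ)
        (.and (DECF (Fin.succ (Fin.succ (Fin.succ 0))) (Fin.succ (Fin.succ 0)) 0
                Dc.succ.succ.succ.succ.succ)
          (.neg (.eq 0 (Fin.succ 0)))))))))))

section PhiR

variable {N : ZFSet} (hN : IsTransModelZFC N)
variable {P : Type} [Preorder P] {cP : P → ZFSet} (hcP : Function.Injective cP)
  (hPM : ZFSet.range cP ∈ N) {Dec : P → ℕ → ℕ → Prop}

/-- The set of sequences rejected by `q''`. -/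
def RSet (Dec : P → ℕ → ℕ → Prop) (q'' : P) : Set (List ℕ) :=
  {l | ∀ q, q ≤ q'' → ∃ c, c ≤ q ∧ ∃ i, i < l.length ∧
    ∃ m', Dec c i m' ∧ m' ≠ l.getD i 0}

include hN hcP hPM

theorem sem_PHIR {n : ℕ} (τ qq Ord Dc : Fin n) (v : Fin n → ZFSet)
    (hv : ∀ i, v i ∈ N) (q'' : P) (l : List ℕ)
    (hτ : v τ = listZF l) (hqq : v qq = cP q'') (hOrd : v Ord = ordZF cP)
    (hDc : v Dc = decZF cP Dec) :
    SatM N (PHIR τ qq Ord Dc) v ↔ l ∈ RSet Dec q'' := by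
  rw [PHIR, satm_all]
  constructor
  · intro h q hq
    have h1 := h (cP q) (cPN hN hcP hPM q)
    rw [satm_imp] at h1
    have hv1 := consN (cPN hN hcP hPM q) hv
    rw [sem_MEMKPF hN _ _ _ _ hv1] at h1
    simp only [Fin.cons_zero, Fin.cons_succ] at h1
    rw [hqq, hOrd] at h1
    have h2 := h1 ((pair_mem_ordZF hcP).mpr hq)
    rw [satm_ex] at h2
    obtain ⟨cz, hczN, h2⟩ := h2
    rw [satm_and] at h2
    obtain ⟨hle, h2⟩ := h2
    have hv2 := consN hczN hv1
    rw [sem_MEMKPF hN _ _ _ _ hv2] at hle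
    simp only [Fin.cons_zero, Fin.cons_succ] at hle
    rw [hOrd] at hle
    obtain ⟨a, b, hab, heq⟩ := mem_ordZF.mp hle
    obtain ⟨ha, hb⟩ := ZFSet.pair_injective heq
    have hbq : b = q := hcP hb.symm
    subst hbq
    rw [satm_ex] at h2
    obtain ⟨iz, hizN, h2⟩ := h2
    rw [satm_ex] at h2
    obtain ⟨mz, hmzN, h2⟩ := h2
    rw [satm_ex] at h2
    obtain ⟨m'z, hm'zN, h2⟩ := h2
    rw [satm_and] at h2
    obtain ⟨hmem, h2⟩ := h2
    rw [satm_and] at h2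
    obtain ⟨hdec, hneq⟩ := h2
    have hv5 := consN hm'zN (consN hmzN (consN hizN hv2))
    rw [sem_MEMKPF hN _ _ _ _ hv5] at hmem
    rw [sem_DECF hN _ _ _ _ _ hv5] at hdec
    simp only [Fin.cons_zero, Fin.cons_succ] at hmem hdec hneq
    rw [hτ] at hmem
    rw [hDc] at hdec
    obtain ⟨i, hi, hii, hmm⟩ := pair_mem_listZF.mp hmem
    obtain ⟨a', i', m', hd, heq'⟩ := mem_decZF.mp hdec
    obtain ⟨ha', hprs⟩ := ZFSet.pair_injective heq'
    obtain ⟨hi', hm'⟩ := ZFSet.pair_injective hprs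
    have haa : a' = a := hcP (ha'.symm.trans ha)
    have hii' : i' = i := natZF_injective (hi'.symm.trans hii)
    refine ⟨a, hab, i, hi, m', by rwa [← haa, ← hii'], ?_⟩
    intro hcontra
    apply hneq
    show m'z = mz
    rw [hm', hmm, hcontra]
  · intro hR q hqN
    rw [satm_imp]
    intro hle
    have hv1 := consN hqN hv
    rw [sem_MEMKPF hN _ _ _ _ hv1] at hle
    simp only [Fin.cons_zero, Fin.cons_succ] at hle
    rw [hqq, hOrd] at hle
    obtain ⟨a, b, hab, heq⟩ := mem_ordZF.mp hle
    obtain ⟨ha, hb⟩ := ZFSet.pair_injective heq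
    have hbq : b = q'' := hcP hb.symm
    subst hbq
    subst ha
    obtain ⟨c, hc, i, hi, m', hd, hne⟩ := hR a hab
    rw [satm_ex]
    refine ⟨cP c, cPN hN hcP hPM c, ?_⟩
    rw [satm_and]
    have hv2 := consN (cPN hN hcP hPM c) hv1
    rw [sem_MEMKPF hN _ _ _ _ hv2]
    simp only [Fin.cons_zero, Fin.cons_succ]
    rw [hOrd]
    refine ⟨(pair_mem_ordZF hcP).mpr hc, ?_⟩
    rw [satm_ex]
    refine ⟨natZF i, natZFN hN i, ?_⟩
    rw [satm_ex]
    refine ⟨natZF (l.getD i 0), natZFN hN _, ?_⟩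
    rw [satm_ex]
    refine ⟨natZF m', natZFN hN _, ?_⟩
    rw [satm_and]
    have hv5 := consN (natZFN hN m') (consN (natZFN hN (l.getD i 0))
      (consN (natZFN hN i) hv2))
    rw [sem_MEMKPF hN _ _ _ _ hv5]
    simp only [Fin.cons_zero, Fin.cons_succ]
    rw [hτ]
    refine ⟨mem_listZF.mpr ⟨i, hi, rfl⟩, ?_⟩
    rw [satm_and]
    rw [sem_DECF hN _ _ _ _ _ hv5]
    simp only [Fin.cons_zero, Fin.cons_succ]
    rw [hDc]
    refine ⟨(pair_mem_decZF hcP).mpr hd, ?_⟩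
    rw [satm_neg]
    intro hcontra
    have : natZF m' = natZF (l.getD i 0) := hcontra
    exact hne (natZF_injective this)

theorem RSetN (q'' : P) (hOrdM : ordZF cP ∈ N) (hDecM : decZF cP Dec ∈ N) :
    listSetZF (RSet Dec q'') ∈ N := by
  obtain ⟨S, hS, hSc⟩ := seqSetN hN
  have hpar : ∀ i, (![cP q'', ordZF cP, decZF cP Dec] : Fin 3 → ZFSet) i ∈ N := by
    intro i
    fin_cases i
    · simpa using cPN hN hcP hPM q''
    · simpa using hOrdM
    · simpa using hDecM
  obtain ⟨Y, hY, hYc⟩ := sepN hN (n := 3) (PHIR 0 1 2 3) S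
    ![cP q'', ordZF cP, decZF cP Dec] hS hpar
  have hYe : Y = listSetZF (RSet Dec q'') := by
    apply ZFSet.ext
    intro z
    rw [hYc, mem_listSetZF]
    constructor
    · rintro ⟨hzS, hsat⟩
      obtain ⟨l, rfl⟩ := (hSc z).mp hzS
      refine ⟨l, ?_, rfl⟩
      have hv0 : ∀ i, (Fin.cons (listZF l) ![cP q'', ordZF cP, decZF cP Dec]
          : Fin 4 → ZFSet) i ∈ N := consN (listZFN hN l) hpar
      exact (sem_PHIR hN hcP hPM (0 : Fin 4) 1 2 3 _ hv0 q'' l rfl rfl rfl rfl).mp hsat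
    · rintro ⟨l, hl, rfl⟩
      refine ⟨(hSc _).mpr ⟨l, rfl⟩, ?_⟩
      have hv0 : ∀ i, (Fin.cons (listZF l) ![cP q'', ordZF cP, decZF cP Dec]
          : Fin 4 → ZFSet) i ∈ N := consN (listZFN hN l) hpar
      exact (sem_PHIR hN hcP hPM (0 : Fin 4) 1 2 3 _ hv0 q'' l rfl rfl rfl rfl).mpr hl
  rwa [hYe] at hY

end PhiR


/-! ### Combining `η` with the tail of `l`, and the associated formulas -/

theorem length_comb {η l : List ℕ} (hl : η.length ≤ l.length) :
    (η ++ l.drop η.length).length = l.length := by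
  simp
  omega

theorem getD_comb_lt {η l : List ℕ} {i : ℕ} (hi : i < η.length) :
    (η ++ l.drop η.length).getD i 0 = η.getD i 0 := by
  rw [getD_eq (by simp; omega), getD_eq hi, List.getElem_append_left hi]

theorem getD_comb_ge {η l : List ℕ} {i : ℕ} (hl : η.length ≤ l.length)
    (hge : η.length ≤ i) (hi : i < l.length) :
    (η ++ l.drop η.length).getD i 0 = l.getD i 0 := by
  rw [getD_eq (by rw [length_comb hl]; exact hi), getD_eq hi,
    List.getElem_append_right hge, List.getElem_drop]
  congr 1
  omega

theorem mem_listZF_comb {η l : List ℕ} {n₀ : ℕ} (hη : η.length = n₀)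
    (hl : n₀ ≤ l.length) (z : ZFSet) :
    z ∈ listZF (η ++ l.drop n₀) ↔
      z ∈ listZF η ∨ (z ∈ listZF l ∧ ∃ (i : ℕ) (m : ZFSet),
        ¬ i < n₀ ∧ z = ZFSet.pair (natZF i) m) := by
  subst hη
  constructor
  · intro hz
    obtain ⟨i, hi, rfl⟩ := mem_listZF.mp hz
    rw [length_comb hl] at hi
    by_cases hcase : i < η.length
    · left
      rw [getD_comb_lt hcase]
      exact mem_listZF.mpr ⟨i, hcase, rfl⟩
    · right
      push_neg at hcase
      rw [getD_comb_ge hl hcase hi]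
      exact ⟨mem_listZF.mpr ⟨i, hi, rfl⟩, i, _, by omega, rfl⟩
  · rintro (hz | ⟨hz, i, m, hni, rfl⟩)
    · obtain ⟨i, hi, rfl⟩ := mem_listZF.mp hz
      rw [← getD_comb_lt (l := l) hi]
      exact mem_listZF.mpr ⟨i, by rw [length_comb hl]; omega, rfl⟩
    · obtain ⟨i', hi', h1, h2⟩ := pair_mem_listZF.mp hz
      have hii : i = i' := natZF_injective h1
      subst hii
      rw [h2, ← getD_comb_ge hl (by omega) hi']
      exact mem_listZF.mpr ⟨i, by rw [length_comb hl]; exact hi', rfl⟩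

/-- Internal: every `i ∈ n0` is in the domain of `τ`. -/
def LENF {n : ℕ} (τ n0 : Fin n) : Fml n :=
  .all (.imp (.mem 0 n0.succ)
    (.ex (.ex (.and (KPAIRF (Fin.succ (Fin.succ 0)) (Fin.succ 0) 0)
      (.mem 0 τ.succ.succ.succ)))))

/-- Internal: `θ = η ∪ {⟨i,m⟩ ∈ τ : i ∉ n0}`. -/
def COMBF {n : ℕ} (τ θ eta n0 : Fin n) : Fml n :=
  .all (.iff (.mem 0 θ.succ)
    (.or (.mem 0 eta.succ)
      (.and (.mem 0 τ.succ)
        (.ex (.ex (.and (KPAIRF (Fin.succ 0) 0 (Fin.succ (Fin.succ 0)))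
          (.neg (.mem (Fin.succ 0) n0.succ.succ.succ))))))))

section PhiELemmas

variable {N : ZFSet} (hN : IsTransModelZFC N)
include hN

theorem sem_LENF {n : ℕ} (τ n0 : Fin n) (v : Fin n → ZFSet)
    (hv : ∀ i, v i ∈ N) (l : List ℕ) (n₀ : ℕ)
    (hτ : v τ = listZF l) (hn0 : v n0 = natZF n₀) :
    SatM N (LENF τ n0) v ↔ n₀ ≤ l.length := by
  rw [LENF, satm_all]
  constructor
  · intro h
    by_contra hcon
    push_neg at hcon
    have h1 := h (natZF l.length) (natZFN hN _)
    rw [satm_imp] at h1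
    have h2 := h1 (show (natZF l.length) ∈ v n0 by
      rw [hn0]; exact natZF_mem_natZF hcon)
    rw [satm_ex] at h2
    obtain ⟨mz, hmzN, h2⟩ := h2
    rw [satm_ex] at h2
    obtain ⟨zz, hzzN, h2⟩ := h2
    rw [satm_and] at h2
    obtain ⟨hkp, hmem⟩ := h2
    rw [sem_KPAIRF hN _ _ _ _ (consN hzzN (consN hmzN
      (consN (natZFN hN _) hv)))] at hkp
    simp only [SatM, Fin.cons_zero, Fin.cons_succ] at hkp hmem
    rw [hτ] at hmem
    rw [hkp] at hmem
    obtain ⟨j, hj, hj1, _⟩ := pair_mem_listZF.mp hmem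
    have := natZF_injective hj1
    omega
  · intro hle iz hizN
    rw [satm_imp]
    intro hiz
    have h' : iz ∈ v n0 := hiz
    rw [hn0] at h'
    obtain ⟨j, hj, rfl⟩ := mem_natZF.mp h'
    rw [satm_ex]
    refine ⟨natZF (l.getD j 0), natZFN hN _, ?_⟩
    rw [satm_ex]
    have hpN : ZFSet.pair (natZF j) (natZF (l.getD j 0)) ∈ N :=
      kpairN hN (natZFN hN _) (natZFN hN _)
    refine ⟨ZFSet.pair (natZF j) (natZF (l.getD j 0)), hpN, ?_⟩
    rw [satm_and]
    rw [sem_KPAIRF hN _ _ _ _ (consN hpN (consN (natZFN hN (l.getD j 0))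
      (consN (natZFN hN j) hv)))]
    simp only [SatM, Fin.cons_zero, Fin.cons_succ]
    refine ⟨by trivial, ?_⟩
    rw [hτ]
    exact mem_listZF.mpr ⟨j, by omega, rfl⟩

theorem sem_COMBF {n : ℕ} (τ θ eta n0 : Fin n) (v : Fin n → ZFSet)
    (hv : ∀ i, v i ∈ N) (l η : List ℕ)
    (hτ : v τ = listZF l) (heta : v eta = listZF η) (hn0 : v n0 = natZF η.length)
    (hlen : η.length ≤ l.length) :
    SatM N (COMBF τ θ eta n0) v ↔ v θ = listZF (η ++ l.drop η.length) := by
  rw [COMBF, satm_all]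
  constructor
  · intro h
    apply ZFSet.ext
    intro z
    rw [mem_listZF_comb rfl hlen]
    constructor
    · intro hz
      have hzN : z ∈ N := trN hN (hv θ) hz
      have h1 := h z hzN
      rw [satm_iff] at h1
      have h2 := h1.mp hz
      rw [satm_or] at h2
      rcases h2 with h2 | h2
      · left
        have : z ∈ v eta := h2
        rwa [heta] at this
      · right
        rw [satm_and] at h2
        obtain ⟨hzτ, h2⟩ := h2
        have hzl : z ∈ listZF l := by
          have : z ∈ v τ := hzτ
          rwa [hτ] at this
        refine ⟨hzl, ?_⟩
        rw [satm_ex] at h2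
        obtain ⟨iz, hizN, h2⟩ := h2
        rw [satm_ex] at h2
        obtain ⟨mz, hmzN, h2⟩ := h2
        rw [satm_and] at h2
        obtain ⟨hkp, hni⟩ := h2
        rw [sem_KPAIRF hN _ _ _ _ (consN hmzN (consN hizN (consN hzN hv)))] at hkp
        simp only [SatM, satm_neg, Fin.cons_zero, Fin.cons_succ] at hkp hni
        rw [hkp] at hzl
        obtain ⟨i₀, hi₀, hii, hmm⟩ := pair_mem_listZF.mp hzl
        refine ⟨i₀, mz, ?_, by rw [hkp, hii]⟩
        intro hcon
        apply hni
        show iz ∈ v n0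
        rw [hn0, hii]
        exact natZF_mem_natZF hcon
    · intro hz
      have hcomb : z ∈ listZF (η ++ l.drop η.length) :=
        (mem_listZF_comb rfl hlen z).mpr hz
      have hzN : z ∈ N := trN hN (listZFN hN (η ++ l.drop η.length)) hcomb
      have h1 := h z hzN
      rw [satm_iff] at h1
      refine h1.mpr ?_
      rw [satm_or]
      rcases hz with hz | ⟨hzl, i, m, hni, rfl⟩
      · left
        show z ∈ v eta
        rw [heta]
        exact hz
      · right
        rw [satm_and]
        have hmN : m ∈ N := by
          obtain ⟨i', hi', h1', h2'⟩ := pair_mem_listZF.mp hzl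
          rw [h2']
          exact natZFN hN _
        refine ⟨show _ ∈ v τ by rw [hτ]; exact hzl, ?_⟩
        rw [satm_ex]
        refine ⟨natZF i, natZFN hN _, ?_⟩
        rw [satm_ex]
        refine ⟨m, hmN, ?_⟩
        rw [satm_and]
        rw [sem_KPAIRF hN _ _ _ _ (consN hmN (consN (natZFN hN i) (consN hzN hv)))]
        simp only [SatM, satm_neg, Fin.cons_zero, Fin.cons_succ]
        refine ⟨by trivial, ?_⟩
        intro hcon
        have : natZF i ∈ v n0 := hcon
        rw [hn0] at this
        obtain ⟨j, hj, hji⟩ := mem_natZF.mp this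
        have := natZF_injective hji
        omega
  · intro hT z hzN
    rw [satm_iff, satm_or, satm_and, satm_ex]
    have hmemiff : SatM N (Fml.mem 0 θ.succ) (Fin.cons z v) ↔
        z ∈ listZF (η ++ l.drop η.length) := by
      show z ∈ v θ ↔ _
      rw [hT]
    rw [hmemiff, mem_listZF_comb rfl hlen]
    constructor
    · rintro (hz | ⟨hzl, i, m, hni, rfl⟩)
      · left
        show z ∈ v eta
        rw [heta]
        exact hz
      · right
        have hmN : m ∈ N := by
          obtain ⟨i', hi', h1', h2'⟩ := pair_mem_listZF.mp hzl
          rw [h2']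
          exact natZFN hN _
        refine ⟨show _ ∈ v τ by rw [hτ]; exact hzl, ?_⟩
        refine ⟨natZF i, natZFN hN _, ?_⟩
        rw [satm_ex]
        refine ⟨m, hmN, ?_⟩
        rw [satm_and]
        rw [sem_KPAIRF hN _ _ _ _ (consN hmN (consN (natZFN hN i) (consN hzN hv)))]
        simp only [SatM, satm_neg, Fin.cons_zero, Fin.cons_succ]
        refine ⟨by trivial, ?_⟩
        intro hcon
        have : natZF i ∈ v n0 := hcon
        rw [hn0] at this
        obtain ⟨j, hj, hji⟩ := mem_natZF.mp this
        have := natZF_injective hji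
        omega
    · rintro (hz | ⟨hzτ, iz, hizN, h2⟩)
      · left
        have : z ∈ v eta := hz
        rwa [heta] at this
      · right
        rw [satm_ex] at h2
        obtain ⟨mz, hmzN, h2⟩ := h2
        rw [satm_and] at h2
        obtain ⟨hkp, hni⟩ := h2
        rw [sem_KPAIRF hN _ _ _ _ (consN hmzN (consN hizN (consN hzN hv)))] at hkp
        simp only [SatM, satm_neg, Fin.cons_zero, Fin.cons_succ] at hkp hni
        have hzl : z ∈ listZF l := by
          have : z ∈ v τ := hzτ
          rwa [hτ] at this
        have hzl2 := hzl
        rw [hkp] at hzl2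
        obtain ⟨i₀, hi₀, hii, hmm⟩ := pair_mem_listZF.mp hzl2
        refine ⟨hzl, i₀, mz, ?_, by rw [hkp, hii]⟩
        intro hcon
        apply hni
        show iz ∈ v n0
        rw [hn0, hii]
        exact natZF_mem_natZF hcon

end PhiELemmas


/-! ### The main dense-set formula -/

/-- Internal formula: `|τ| ≥ n0` and, letting `θ = η ++ τ↾[n0,·)`, either `θ` is
incompatible with `b`, or some `c ≤ b` below a member of `D` deciding all `i ∈ k`
satisfies `[θ'] ⊆ π(c)` for every sequence `θ' ⊇ θ`. -/
def PHIE {n : ℕ} (τ Ord Dc DD bb eta n0 kk SS : Fin n) : Fml n :=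
  .and (LENF τ n0)
    (.ex (.and (COMBF τ.succ 0 eta.succ n0.succ)
      (.or (.neg (COMPATF bb.succ 0 Ord.succ Dc.succ))
        (.ex (.and (MEMKPF 0 bb.succ.succ Ord.succ.succ)
          (.and (.ex (.and (.mem 0 DD.succ.succ.succ)
                  (MEMKPF (Fin.succ 0) 0 Ord.succ.succ.succ)))
          (.and (.all (.imp (.mem 0 kk.succ.succ.succ)
                  (.ex (DECF (Fin.succ (Fin.succ 0)) (Fin.succ 0) 0
                    Dc.succ.succ.succ.succ))))
            (.all (.imp (.mem 0 SS.succ.succ.succ)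
              (.imp (SUBF (Fin.succ (Fin.succ 0)) 0)
                (COMPATF (Fin.succ 0) 0 Ord.succ.succ.succ Dc.succ.succ.succ)))))))))))

section PhiE

variable {N : ZFSet} (hN : IsTransModelZFC N)
variable {P : Type} [Preorder P] {cP : P → ZFSet} (hcP : Function.Injective cP)
  (hPM : ZFSet.range cP ∈ N) {Dec : P → ℕ → ℕ → Prop}

/-- The dense subset of Cohen forcing used at each stage of the construction. -/
def ESet (Dec : P → ℕ → ℕ → Prop) (b : P) (D : Set P) (η : List ℕ) (k : ℕ) :
    Set (List ℕ) :=
  {l | η.length ≤ l.length ∧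
    (¬ Compat Dec b (η ++ l.drop η.length) ∨
      ∃ c, c ≤ b ∧ (∃ d ∈ D, c ≤ d) ∧ (∀ i, i < k → ∃ m, Dec c i m) ∧
        ∀ tl : List ℕ, (η ++ l.drop η.length) <+: tl → Compat Dec c tl)}

include hN hcP hPM

theorem sem_PHIE {n : ℕ} (τ Ord Dc DD bb eta n0 kk SS : Fin n) (v : Fin n → ZFSet)
    (hv : ∀ i, v i ∈ N) (b : P) (D : Set P) (η l : List ℕ) (k : ℕ) (S : ZFSet)
    (hτ : v τ = listZF l) (hOrd : v Ord = ordZF cP) (hDc : v Dc = decZF cP Dec)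
    (hDD : v DD = subsetZF cP D) (hbb : v bb = cP b) (heta : v eta = listZF η)
    (hn0 : v n0 = natZF η.length) (hkk : v kk = natZF k) (hSS : v SS = S)
    (hSc : ∀ z, z ∈ S ↔ ∃ tl : List ℕ, z = listZF tl) :
    SatM N (PHIE τ Ord Dc DD bb eta n0 kk SS) v ↔ l ∈ ESet Dec b D η k := by
  rw [PHIE, satm_and]
  constructor
  · rintro ⟨hl1, hl2⟩
    have hlen : η.length ≤ l.length :=
      (sem_LENF hN τ n0 v hv l η.length hτ hn0).mp hl1
    refine ⟨hlen, ?_⟩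
    rw [satm_ex] at hl2
    obtain ⟨T, hTN, h2⟩ := hl2
    rw [satm_and] at h2
    obtain ⟨hcomb, hor⟩ := h2
    have hv1 := consN hTN hv
    have hTeq : T = listZF (η ++ l.drop η.length) := by
      have := (sem_COMBF hN τ.succ 0 eta.succ n0.succ _ hv1 l η
        (by simpa using hτ) (by simpa using heta) (by simpa using hn0) hlen).mp hcomb
      simpa using this
    rw [satm_or] at hor
    rcases hor with hesc | hmain
    · left
      rw [satm_neg] at hesc
      intro hcompat
      apply hesc
      rw [sem_COMPATF hN hcP hPM (Dec := Dec) _ _ _ _ _ hv1 b (η ++ l.drop η.length)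
        (by simpa using hbb) (by simpa using hTeq) (by simpa using hOrd)
        (by simpa using hDc)]
      exact hcompat
    · right
      rw [satm_ex] at hmain
      obtain ⟨cz, hczN, h3⟩ := hmain
      rw [satm_and] at h3
      obtain ⟨hcb, h3⟩ := h3
      have hv2 := consN hczN hv1
      rw [sem_MEMKPF hN _ _ _ _ hv2] at hcb
      simp only [Fin.cons_zero, Fin.cons_succ] at hcb
      rw [hbb, hOrd] at hcb
      obtain ⟨c, b2, hcble, heq⟩ := mem_ordZF.mp hcb
      obtain ⟨hc1, hc2⟩ := ZFSet.pair_injective heq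
      have hb2 : b2 = b := hcP hc2.symm
      subst hb2
      subst hc1
      rw [satm_and] at h3
      obtain ⟨hd3, h3⟩ := h3
      rw [satm_and] at h3
      obtain ⟨hk3, hs3⟩ := h3
      refine ⟨c, hcble, ?_, ?_, ?_⟩
      · rw [satm_ex] at hd3
        obtain ⟨dz, hdzN, h4⟩ := hd3
        rw [satm_and] at h4
        obtain ⟨hdD, hcd⟩ := h4
        have hv3 := consN hdzN hv2
        have hdD' : dz ∈ subsetZF cP D := by
          have : dz ∈ v DD := hdD
          rwa [hDD] at this
        obtain ⟨d, hdD2, rfl⟩ := mem_subsetZF.mp hdD'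
        rw [sem_MEMKPF hN _ _ _ _ hv3] at hcd
        simp only [Fin.cons_zero, Fin.cons_succ] at hcd
        rw [hOrd] at hcd
        exact ⟨d, hdD2, (pair_mem_ordZF hcP).mp hcd⟩
      · intro i hik
        rw [satm_all] at hk3
        have h4 := hk3 (natZF i) (natZFN hN i)
        rw [satm_imp] at h4
        have h5 := h4 (show natZF i ∈ v kk by rw [hkk]; exact natZF_mem_natZF hik)
        rw [satm_ex] at h5
        obtain ⟨mz, hmzN, h6⟩ := h5
        rw [sem_DECF hN _ _ _ _ _ (consN hmzN (consN (natZFN hN i) hv2))] at h6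
        simp only [Fin.cons_zero, Fin.cons_succ] at h6
        rw [hDc] at h6
        obtain ⟨a', i', m', hdc, heq'⟩ := mem_decZF.mp h6
        obtain ⟨ha', hprs⟩ := ZFSet.pair_injective heq'
        obtain ⟨hi', _⟩ := ZFSet.pair_injective hprs
        have haa : a' = c := hcP ha'.symm
        have hii : i' = i := natZF_injective hi'.symm
        exact ⟨m', by rwa [haa, hii] at hdc⟩
      · intro tl hpre
        rw [satm_all] at hs3
        have h4 := hs3 (listZF tl) (listZFN hN tl)
        rw [satm_imp, satm_imp] at h4
        have hv3 := consN (listZFN hN tl) hv2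
        rw [sem_SUBF hN _ _ _ hv3] at h4
        simp only [Fin.cons_zero, Fin.cons_succ] at h4
        have h5 := h4 (show listZF tl ∈ v SS by
            rw [hSS]; exact (hSc _).mpr ⟨tl, rfl⟩)
          (by rw [hTeq]; exact listZF_subset_of_prefix hpre)
        rw [sem_COMPATF hN hcP hPM (Dec := Dec) _ _ _ _ _ hv3 c tl (by simp)
          (by simp) (by simpa using hOrd) (by simpa using hDc)] at h5
        exact h5
  · rintro ⟨hlen, hor⟩
    refine ⟨(sem_LENF hN τ n0 v hv l η.length hτ hn0).mpr hlen, ?_⟩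
    rw [satm_ex]
    have hTN := listZFN hN (η ++ l.drop η.length)
    refine ⟨listZF (η ++ l.drop η.length), hTN, ?_⟩
    rw [satm_and]
    have hv1 := consN hTN hv
    refine ⟨?_, ?_⟩
    · rw [sem_COMBF hN τ.succ 0 eta.succ n0.succ _ hv1 l η
        (by simpa using hτ) (by simpa using heta) (by simpa using hn0) hlen]
      simp
    · rw [satm_or]
      rcases hor with hesc | ⟨c, hcb, ⟨d, hdD, hcd⟩, hdec, hall⟩
      · left
        rw [satm_neg]
        intro hcon
        apply hesc
        rw [sem_COMPATF hN hcP hPM (Dec := Dec) _ _ _ _ _ hv1 b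
          (η ++ l.drop η.length) (by simpa using hbb) (by simp)
          (by simpa using hOrd) (by simpa using hDc)] at hcon
        exact hcon
      · right
        rw [satm_ex]
        refine ⟨cP c, cPN hN hcP hPM c, ?_⟩
        rw [satm_and]
        have hv2 := consN (cPN hN hcP hPM c) hv1
        rw [sem_MEMKPF hN _ _ _ _ hv2]
        simp only [Fin.cons_zero, Fin.cons_succ]
        rw [hbb, hOrd]
        refine ⟨(pair_mem_ordZF hcP).mpr hcb, ?_⟩
        rw [satm_and]
        constructor
        · rw [satm_ex]
          refine ⟨cP d, cPN hN hcP hPM d, ?_⟩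
          rw [satm_and]
          have hv3 := consN (cPN hN hcP hPM d) hv2
          rw [sem_MEMKPF hN _ _ _ _ hv3]
          simp only [Fin.cons_zero, Fin.cons_succ]
          rw [hOrd]
          exact ⟨show cP d ∈ v DD by rw [hDD]; exact mem_subsetZF.mpr ⟨d, hdD, rfl⟩,
            (pair_mem_ordZF hcP).mpr hcd⟩
        · rw [satm_and]
          constructor
          · rw [satm_all]
            intro iz hizN
            rw [satm_imp]
            intro hik
            have hik' : iz ∈ natZF k := by
              have : iz ∈ v kk := hik
              rwa [hkk] at this
            obtain ⟨i, hi, rfl⟩ := mem_natZF.mp hik'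
            obtain ⟨m, hm⟩ := hdec i hi
            rw [satm_ex]
            refine ⟨natZF m, natZFN hN m, ?_⟩
            rw [sem_DECF hN _ _ _ _ _ (consN (natZFN hN m)
              (consN (natZFN hN i) hv2))]
            simp only [Fin.cons_zero, Fin.cons_succ]
            rw [hDc]
            exact (pair_mem_decZF hcP).mpr hm
          · rw [satm_all]
            intro σ hσN
            rw [satm_imp]
            intro hσS
            rw [satm_imp]
            intro hsub
            have hσS' : σ ∈ S := by
              have : σ ∈ v SS := hσS
              rwa [hSS] at this
            obtain ⟨tl, rfl⟩ := (hSc σ).mp hσS'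
            have hv3 := consN (listZFN hN tl) hv2
            rw [sem_SUBF hN _ _ _ hv3] at hsub
            simp only [Fin.cons_zero, Fin.cons_succ] at hsub
            have hpre : (η ++ l.drop η.length) <+: tl :=
              prefix_of_listZF_subset hsub
            rw [sem_COMPATF hN hcP hPM (Dec := Dec) _ _ _ _ _ hv3 c tl (by simp)
              (by simp) (by simpa using hOrd) (by simpa using hDc)]
            exact hall tl hpre

theorem ESetN (b : P) (D : Set P) (η : List ℕ) (k : ℕ)
    (hOrdM : ordZF cP ∈ N) (hDecM : decZF cP Dec ∈ N)
    (hDM : subsetZF cP D ∈ N) :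
    listSetZF (ESet Dec b D η k) ∈ N := by
  obtain ⟨S, hS, hSc⟩ := seqSetN hN
  have hpar : ∀ i, (![ordZF cP, decZF cP Dec, subsetZF cP D, cP b, listZF η,
      natZF η.length, natZF k, S] : Fin 8 → ZFSet) i ∈ N := by
    intro i
    fin_cases i
    · simpa using hOrdM
    · simpa using hDecM
    · simpa using hDM
    · simpa using cPN hN hcP hPM b
    · simpa using listZFN hN η
    · simpa using natZFN hN _
    · simpa using natZFN hN _
    · simpa using hS
  obtain ⟨Y, hY, hYc⟩ := sepN hN (n := 8) (PHIE 0 1 2 3 4 5 6 7 8) S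
    ![ordZF cP, decZF cP Dec, subsetZF cP D, cP b, listZF η,
      natZF η.length, natZF k, S] hS hpar
  have hYe : Y = listSetZF (ESet Dec b D η k) := by
    apply ZFSet.ext
    intro z
    rw [hYc, mem_listSetZF]
    constructor
    · rintro ⟨hzS, hsat⟩
      obtain ⟨l, rfl⟩ := (hSc z).mp hzS
      refine ⟨l, ?_, rfl⟩
      exact (sem_PHIE hN hcP hPM (0 : Fin 9) 1 2 3 4 5 6 7 8 _
        (consN (listZFN hN l) hpar) b D η l k S rfl rfl rfl rfl rfl rfl rfl rfl rfl
        hSc).mp hsat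
    · rintro ⟨l, hl, rfl⟩
      refine ⟨(hSc _).mpr ⟨l, rfl⟩, ?_⟩
      exact (sem_PHIE hN hcP hPM (0 : Fin 9) 1 2 3 4 5 6 7 8 _
        (consN (listZFN hN l) hpar) b D η l k S rfl rfl rfl rfl rfl rfl rfl rfl rfl
        hSc).mpr hl
  rwa [hYe] at hY

end PhiE


/-! ### Combinatorial lemmas about `FORC` and `Compat` -/

section Comb

variable {P : Type} [Preorder P] {Dec : P → ℕ → ℕ → Prop}

theorem prefix_getD {a b : List ℕ} (h : a <+: b) {i : ℕ} (hi : i < a.length) :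
    a.getD i 0 = b.getD i 0 := by
  rw [getD_eq hi, getD_eq (lt_of_lt_of_le hi h.length_le)]
  exact h.getElem hi

theorem FORC_mono {q q' : P} {tl : List ℕ} (h : FORC Dec q tl) (hle : q' ≤ q) :
    FORC Dec q' tl := fun c hc => h c (le_trans hc hle)

theorem FORC_prefix {q : P} {tl tl' : List ℕ} (h : FORC Dec q tl) (hpre : tl' <+: tl) :
    FORC Dec q tl' := by
  intro c hc i hi m hm
  rw [prefix_getD hpre hi]
  exact h c hc i (lt_of_lt_of_le hi hpre.length_le) m hm

theorem Compat_prefix {b : P} {tl tl' : List ℕ} (h : Compat Dec b tl)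
    (hpre : tl' <+: tl) : Compat Dec b tl' := by
  obtain ⟨q, hq, hforc⟩ := h
  exact ⟨q, hq, FORC_prefix hforc hpre⟩

theorem decideBelow (htot : ∀ a : P, ∀ n : ℕ, ∃ b : P, b ≤ a ∧ ∃ m, Dec b n m)
    (hpers : ∀ a b : P, a ≤ b → ∀ n m, Dec b n m → Dec a n m) (a : P) (k : ℕ) :
    ∃ b, b ≤ a ∧ ∀ i, i < k → ∃ m, Dec b i m := by
  induction k with
  | zero => exact ⟨a, le_refl a, by omega⟩
  | succ k ih =>
    obtain ⟨b, hba, hb⟩ := ih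
    obtain ⟨c, hcb, m, hm⟩ := htot b k
    refine ⟨c, le_trans hcb hba, ?_⟩
    intro i hi
    rcases Nat.lt_succ_iff_lt_or_eq.mp hi with h | rfl
    · obtain ⟨m', hm'⟩ := hb i h
      exact ⟨m', hpers c b hcb i m' hm'⟩
    · exact ⟨m, hm⟩

/-- If `q` forces `ρ` and every extension of `η'` is compatible with `q₂ ≤ q`,
then `ρ` is a prefix of `η'`. -/
theorem agree (hpers : ∀ a b : P, a ≤ b → ∀ n m, Dec b n m → Dec a n m)
    (huniq : ∀ (a : P) (n m m' : ℕ), Dec a n m → Dec a n m' → m = m')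
    (htot : ∀ a : P, ∀ n : ℕ, ∃ b : P, b ≤ a ∧ ∃ m, Dec b n m)
    {q q2 : P} {ρ η' : List ℕ} (hq2 : q2 ≤ q) (hforc : FORC Dec q ρ)
    (hη' : ∀ tl : List ℕ, η' <+: tl → Compat Dec q2 tl) :
    ρ <+: η' := by
  have key : ∀ (σ' : List ℕ), η' <+: σ' → ∀ j, j < ρ.length → j < σ'.length →
      σ'.getD j 0 = ρ.getD j 0 := by
    intro σ' hpre j hjρ hjσ
    obtain ⟨q3, hq3, hforc3⟩ := hη' σ' hpre
    have hforcρ : FORC Dec q3 ρ := FORC_mono hforc (le_trans hq3 hq2)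
    obtain ⟨c, hc, m, hm⟩ := htot q3 j
    have h1 : m = σ'.getD j 0 := hforc3 c hc j hjσ m hm
    have h2 : m = ρ.getD j 0 := hforcρ c hc j hjρ m hm
    rw [← h1, h2]
  have hlen : ρ.length ≤ η'.length := by
    by_contra hcon
    push_neg at hcon
    set j := η'.length with hj
    have hjρ : j < ρ.length := hcon
    have := key (η' ++ [ρ.getD j 0 + 1]) (List.prefix_append _ _) j hjρ (by simp [hj])
    rw [getD_eq (by simp [hj])] at this
    rw [List.getElem_append_right (by omega)] at this
    simp at this
  have hval : ∀ j, j < ρ.length → η'.getD j 0 = ρ.getD j 0 := by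
    intro j hj
    exact key η' (List.prefix_refl _) j hj (by omega)
  refine List.prefix_iff_eq_take.mpr (List.ext_getElem (by simp; omega) ?_)
  intro i h1 h2
  rw [List.getElem_take]
  have := hval i h1
  rw [getD_eq (l := η') (by omega), getD_eq (l := ρ) (by omega)] at this
  exact this.symm

end Comb


/-! ### The main construction lemmas -/

section MainLemmas

variable {N : ZFSet} (hN : IsTransModelZFC N)
variable {P : Type} [Preorder P] {cP : P → ZFSet} (hcP : Function.Injective cP)
  (hPM : ZFSet.range cP ∈ N) (hPordM : ordZF cP ∈ N)
  {Dec : P → ℕ → ℕ → Prop} (hDecM : decZF cP Dec ∈ N)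
  (hpers : ∀ a b : P, a ≤ b → ∀ n m, Dec b n m → Dec a n m)
  (huniq : ∀ (a : P) (n m m' : ℕ), Dec a n m → Dec a n m' → m = m')
  (htot : ∀ a : P, ∀ n : ℕ, ∃ b : P, b ≤ a ∧ ∃ m, Dec b n m)
  (hCohen : ∀ D : Set (List ℕ), listSetZF D ∈ N → (∀ σ : List ℕ, ∃ τ ∈ D, σ <+: τ) →
      ∀ a : P, ∃ b : P, b ≤ a ∧ ∃ τ ∈ D, ∀ i : ℕ, i < τ.length → Dec b i (τ.getD i 0))

include hN hcP hPM hPordM hDecM hpers huniq hCohen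

/-- Below every condition, the projection to Cohen forcing contains a basic
neighbourhood: there is `η` such that every extension of `η` is compatible. -/
theorem compat_base (q'' : P) :
    ∃ η : List ℕ, ∀ tl : List ℕ, η <+: tl → Compat Dec q'' tl := by
  by_cases hd : ∀ σ : List ℕ, ∃ τ ∈ RSet Dec q'', σ <+: τ
  · exfalso
    obtain ⟨b, hbq, τ, hτR, hbdec⟩ :=
      hCohen (RSet Dec q'') (RSetN hN hcP hPM q'' hPordM hDecM) hd q''
    obtain ⟨c, hcb, i, hi, m', hdm', hne⟩ := hτR b hbq
    have h1 : Dec c i (τ.getD i 0) := hpers c b hcb i _ (hbdec i hi)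
    exact hne (huniq c i m' _ hdm' h1)
  · push_neg at hd
    obtain ⟨σ, hσ⟩ := hd
    refine ⟨σ, fun tl hpre => ?_⟩
    have htl : tl ∉ RSet Dec q'' := fun h => hσ tl h hpre
    simp only [RSet, Set.mem_setOf_eq] at htl
    push_neg at htl
    obtain ⟨q, hq, hforc⟩ := htl
    exact ⟨q, hq, hforc⟩

include htot

/-- The stage-dense sets are dense in Cohen forcing. -/
theorem Edense (b : P) (D : Set P) (hD : ∀ a, ∃ d ∈ D, d ≤ a) (η : List ℕ) (k : ℕ)
    (σ : List ℕ) : ∃ τ, σ <+: τ ∧ τ ∈ ESet Dec b D η k := by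
  set σ₁ := σ ++ List.replicate (η.length - σ.length) 0 with hσ₁
  have hσpre : σ <+: σ₁ := List.prefix_append _ _
  have hσ₁len : η.length ≤ σ₁.length := by
    simp [hσ₁]
    omega
  set ρ := η ++ σ₁.drop η.length with hρ
  by_cases hcomp : Compat Dec b ρ
  · obtain ⟨q, hqb, hforc⟩ := hcomp
    obtain ⟨d, hdD, hdq⟩ := hD q
    obtain ⟨q2, hq2d, hq2dec⟩ := decideBelow htot hpers d k
    obtain ⟨η', hη'⟩ := compat_base hN hcP hPM hPordM hDecM hpers huniq hCohen q2
    have hq2q : q2 ≤ q := le_trans hq2d hdq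
    have hρη' : ρ <+: η' := agree hpers huniq htot hq2q hforc hη'
    refine ⟨σ₁ ++ η'.drop ρ.length, hσpre.trans (List.prefix_append _ _), ?_⟩
    have hlen2 : η.length ≤ (σ₁ ++ η'.drop ρ.length).length := by
      simp
      omega
    obtain ⟨t, ht⟩ := hρη'
    have hcombeq : η ++ (σ₁ ++ η'.drop ρ.length).drop η.length = η' := by
      rw [List.drop_append_of_le_length hσ₁len, ← List.append_assoc, ← hρ, ← ht,
        List.drop_left]
    refine ⟨hlen2, Or.inr ⟨q2, le_trans hq2q (le_trans hqb (le_refl b)), ⟨d, hdD, hq2d⟩,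
      hq2dec, ?_⟩⟩
    rw [hcombeq]
    exact hη'
  · exact ⟨σ₁, hσpre, hσ₁len, Or.inl hcomp⟩

end MainLemmas

end CohenProofAux

/-- Let `N` be a countable transitive model of ZFC with `N ⊨ “P is a poset and
P ⊩ ṙ is a Cohen real”` (concretely: for every dense `D ⊆ ℂ` in `N`, densely many
conditions decide an initial segment of `ṙ` in `D`, and for every finite sequence `η` the
boolean value `[[η ⊆ ṙ]]` is nonzero). If `p ∈ P` and `s ∈ ω^ω` is a Cohen real over `N`,
then there is an `N`-generic filter `G ⊆ P` with `p ∈ G` such that `ṙ/G = s` modulo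
finite. -/
theorem generic_filter_realizing_cohen_real_mod_finite
    (N : ZFSet) (hN : IsTransModelZFC N) (hNc : N.toSet.Countable)
    (P : Type) [Preorder P] (cP : P → ZFSet) (hcP : Function.Injective cP)
    (hPM : ZFSet.range cP ∈ N) (hPordM : ordZF cP ∈ N)
    (Dec : P → ℕ → ℕ → Prop) (hDecM : decZF cP Dec ∈ N)
    (hpers : ∀ a b : P, a ≤ b → ∀ n m, Dec b n m → Dec a n m)
    (huniq : ∀ (a : P) (n m m' : ℕ), Dec a n m → Dec a n m' → m = m')
    (htot : ∀ a : P, ∀ n : ℕ, ∃ b : P, b ≤ a ∧ ∃ m, Dec b n m)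
    -- `P` forces `ṙ` to be a Cohen real: initial segments densely meet every dense
    -- subset of Cohen forcing lying in `N` …
    (hCohen : ∀ D : Set (List ℕ), listSetZF D ∈ N → (∀ σ : List ℕ, ∃ τ ∈ D, σ <+: τ) →
      ∀ a : P, ∃ b : P, b ≤ a ∧ ∃ τ ∈ D, ∀ i : ℕ, i < τ.length → Dec b i (τ.getD i 0))
    -- … and every finite sequence `η` has nonzero boolean value `[[η ⊆ ṙ]]`
    (hnonzero : ∀ η : List ℕ, ∃ a : P, ∀ b : P, b ≤ a →
      ∀ i : ℕ, i < η.length → ∀ m, Dec b i m → m = η.getD i 0)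
    (p : P) (s : ℕ → ℕ)
    -- `s` is a Cohen real over `N`
    (hs : ∀ D : Set (List ℕ), listSetZF D ∈ N → (∀ σ : List ℕ, ∃ τ ∈ D, σ <+: τ) →
      ∃ τ ∈ D, ∀ i : ℕ, i < τ.length → τ.getD i 0 = s i) :
    ∃ G : Set P, IsGenericFilter N cP G ∧ p ∈ G ∧
      ∃ r : ℕ → ℕ, (∀ n, ∃ a ∈ G, Dec a n (r n)) ∧ ∀ᶠ n in atTop, r n = s n := by
  classical
  open CohenProofAux in
  obtain ⟨η₀, hη₀⟩ := compat_base hN hcP hPM hPordM hDecM hpers huniq hCohen p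
  set s' : ℕ → ℕ := fun i => if i < η₀.length then η₀.getD i 0 else s i with hs'def
  set sl : ℕ → List ℕ := fun nn => List.ofFn (fun i : Fin nn => s' i) with hsldef
  have hsl_len : ∀ nn, (sl nn).length = nn := fun nn => by simp [hsldef]
  have hsl_getD : ∀ nn i, i < nn → (sl nn).getD i 0 = s' i := by
    intro nn i hi
    rw [getD_eq (by simp [hsldef]; exact hi)]
    simp [hsldef]
  have hsl_prefix : ∀ {n1 n2 : ℕ}, n1 ≤ n2 → sl n1 <+: sl n2 := by
    intro n1 n2 h
    refine List.prefix_iff_eq_take.mpr (List.ext_getElem (by simp [hsldef]; omega) ?_)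
    intro i h1 h2
    rw [List.getElem_take]
    simp [hsldef]
  have hη₀sl : ∀ {nn : ℕ}, η₀.length ≤ nn → η₀ <+: sl nn := by
    intro nn h
    refine List.prefix_iff_eq_take.mpr (List.ext_getElem (by simp [hsldef]; omega) ?_)
    intro i h1 h2
    rw [List.getElem_take]
    have hi : i < η₀.length := h1
    simp only [hsldef, List.getElem_ofFn]
    rw [hs'def]
    simp only [if_pos hi]
    rw [getD_eq hi]
  have hslη₀ : ∀ {nn : ℕ}, nn ≤ η₀.length → sl nn <+: η₀ := by
    intro nn h
    refine List.prefix_iff_eq_take.mpr (List.ext_getElem (by simp [hsldef]; omega) ?_)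
    intro i h1 h2
    rw [List.getElem_take]
    have hi : i < nn := by simpa [hsldef] using h1
    simp only [hsldef, List.getElem_ofFn]
    rw [hs'def]
    simp only [if_pos (by omega : i < η₀.length)]
    rw [getD_eq (by omega)]
  have hINVp : ∀ nn, Compat Dec p (sl nn) := by
    intro nn
    rcases le_or_gt η₀.length nn with h | h
    · exact hη₀ _ (hη₀sl h)
    · exact Compat_prefix (hη₀ _ (List.prefix_refl _)) (hslη₀ (le_of_lt h))
  -- the countable family of dense subsets of `P` coded in `N`
  set Dfam : Set (Set P) := {D | subsetZF cP D ∈ N ∧ ∀ a : P, ∃ d ∈ D, d ≤ a}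
    with hDfamdef
  have hunivD : Set.univ ∈ Dfam := by
    constructor
    · have huniv : subsetZF cP Set.univ = ZFSet.range cP := by
        apply ZFSet.ext
        intro z
        rw [mem_subsetZF, mem_rangecP]
        constructor
        · rintro ⟨d, _, rfl⟩; exact ⟨d, rfl⟩
        · rintro ⟨d, rfl⟩; exact ⟨d, trivial, rfl⟩
      rwa [huniv]
    · exact fun a => ⟨a, trivial, le_refl a⟩
  have hcountN : Countable ↥N.toSet := hNc.to_subtype
  have hinj : Function.Injective
      (fun D : ↥Dfam => (⟨subsetZF cP D.1, D.2.1⟩ : ↥N.toSet)) := by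
    rintro ⟨D1, h1⟩ ⟨D2, h2⟩ heq
    simp only [Subtype.mk.injEq] at heq ⊢
    apply Set.eq_of_subset_of_subset
    · intro d hd
      have : cP d ∈ subsetZF cP D2 := by
        rw [← heq]
        exact mem_subsetZF.mpr ⟨d, hd, rfl⟩
      obtain ⟨d', hd', he'⟩ := mem_subsetZF.mp this
      rwa [hcP he']
    · intro d hd
      have : cP d ∈ subsetZF cP D1 := by
        rw [heq]
        exact mem_subsetZF.mpr ⟨d, hd, rfl⟩
      obtain ⟨d', hd', he'⟩ := mem_subsetZF.mp this
      rwa [hcP he']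
  have hcount : Countable ↥Dfam := hinj.countable
  have hnonempty : Nonempty ↥Dfam := ⟨⟨Set.univ, hunivD⟩⟩
  obtain ⟨e, he⟩ := exists_surjective_nat ↥Dfam
  -- the step lemma
  have hstep : ∀ b : P, (∀ nn, Compat Dec b (sl nn)) → ∀ (k : ℕ) (D : Set P),
      D ∈ Dfam → ∃ c, c ≤ b ∧ (∀ nn, Compat Dec c (sl nn)) ∧
        (∃ d ∈ D, c ≤ d) ∧ (∀ i, i < k → ∃ m, Dec c i m) := by
    intro b hb k D hD
    obtain ⟨τ, hτE, hτs⟩ := hs (ESet Dec b D η₀ k)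
      (ESetN hN hcP hPM b D η₀ k hPordM hDecM hD.1)
      (fun σ => by
        obtain ⟨τ, h1, h2⟩ :=
          Edense hN hcP hPM hPordM hDecM hpers huniq htot hCohen b D hD.2 η₀ k σ
        exact ⟨τ, h2, h1⟩)
    obtain ⟨hlen, hor⟩ := hτE
    have hcombsl : η₀ ++ τ.drop η₀.length = sl τ.length := by
      refine List.ext_getElem (by rw [length_comb hlen, hsl_len]) ?_
      intro i h1 h2
      have hiτ : i < τ.length := by rwa [length_comb hlen] at h1
      rw [← getD_eq h1, ← getD_eq h2, hsl_getD _ _ hiτ]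
      by_cases hcase : i < η₀.length
      · rw [getD_comb_lt hcase, hs'def]
        simp only [if_pos hcase]
      · push_neg at hcase
        rw [getD_comb_ge hlen hcase hiτ, hs'def]
        simp only [if_neg (by omega : ¬ i < η₀.length)]
        exact hτs i hiτ
    rcases hor with hesc | ⟨c, hcb, hd, hdec, hall⟩
    · exfalso
      apply hesc
      rw [hcombsl]
      exact hb τ.length
    · refine ⟨c, hcb, ?_, hd, hdec⟩
      intro nn
      rcases le_or_gt nn τ.length with h | h
      · refine Compat_prefix (hall _ ?_) (hsl_prefix h)
        rw [hcombsl]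
      · refine hall _ ?_
        rw [hcombsl]
        exact hsl_prefix (le_of_lt h)
  -- the decreasing chain
  let Q := {b : P // ∀ nn, Compat Dec b (sl nn)}
  let stepf : Q → ℕ → Q := fun b k =>
    ⟨Classical.choose (hstep b.1 b.2 k (e k).1 (e k).2),
      (Classical.choose_spec (hstep b.1 b.2 k (e k).1 (e k).2)).2.1⟩
  let F : ℕ → Q := fun k => Nat.rec (⟨p, hINVp⟩ : Q) (fun k ih => stepf ih k) k
  have hFsucc : ∀ k, F (k+1) = stepf (F k) k := fun k => rfl
  have hFle : ∀ k, (F (k+1)).1 ≤ (F k).1 := by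
    intro k
    exact (Classical.choose_spec (hstep (F k).1 (F k).2 k (e k).1 (e k).2)).1
  have hFmono : ∀ i j : ℕ, i ≤ j → (F j).1 ≤ (F i).1 := by
    intro i j h
    induction j with
    | zero =>
      have : i = 0 := by omega
      subst this
      exact le_refl _
    | succ j ih =>
      rcases Nat.lt_succ_iff_lt_or_eq.mp (Nat.lt_succ_of_le h) with h' | rfl
      · exact le_trans (hFle j) (ih (by omega))
      · exact le_refl _
  have hFmeets : ∀ k, ∃ d ∈ (e k).1, (F (k+1)).1 ≤ d := by
    intro k
    exact (Classical.choose_spec (hstep (F k).1 (F k).2 k (e k).1 (e k).2)).2.2.1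
  have hFdec : ∀ k i, i < k → ∃ m, Dec (F (k+1)).1 i m := by
    intro k
    exact (Classical.choose_spec (hstep (F k).1 (F k).2 k (e k).1 (e k).2)).2.2.2
  refine ⟨{a | ∃ k, (F k).1 ≤ a}, ⟨?_, ?_, ?_⟩, ⟨0, le_refl p⟩, s', ?_, ?_⟩
  · rintro a ⟨k, hk⟩ b hab
    exact ⟨k, le_trans hk hab⟩
  · rintro a ⟨k1, hk1⟩ b ⟨k2, hk2⟩
    exact ⟨(F (max k1 k2)).1, ⟨max k1 k2, le_refl _⟩,
      le_trans (hFmono _ _ (le_max_left k1 k2)) hk1,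
      le_trans (hFmono _ _ (le_max_right k1 k2)) hk2⟩
  · intro D hDN hDdense
    have hDfamD : D ∈ Dfam := ⟨hDN, hDdense⟩
    obtain ⟨k, hk⟩ := he ⟨D, hDfamD⟩
    obtain ⟨d, hdD, hd⟩ := hFmeets k
    rw [hk] at hdD
    exact ⟨d, ⟨k + 1, hd⟩, hdD⟩
  · intro n
    obtain ⟨m, hm⟩ := hFdec (n+1) n (by omega)
    have hmv : m = s' n := by
      obtain ⟨q, hq, hforc⟩ := (F (n+2)).2 (n+1)
      have hqd : Dec q n m := hpers q _ hq n m hm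
      have := hforc q (le_refl q) n (by rw [hsl_len]; omega) m hqd
      rwa [hsl_getD _ _ (by omega)] at this
    exact ⟨(F (n+2)).1, ⟨n+2, le_refl _⟩, by rwa [← hmv]⟩
  · rw [Filter.eventually_atTop]
    refine ⟨η₀.length, fun n hn => ?_⟩
    rw [hs'def]
    simp only [if_neg (by omega : ¬ n < η₀.length)]

end
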